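/- arXiv:2506.19048 — 5 statements merged into one kernel-verified Lean document; each statement's English description precedes it below -/
import Mathlib

section
/- Let s ∈ (0,1), n ≥ 1, and let Ω ⊂ ℝⁿ be a bounded domain. If E^k (k ∈ ℕ) and E are admissible triples such that E^k → E in L¹_loc(ℝⁿ), then liminf_{k→∞} F^s(E^k, Ω) ≥ F^s(E, Ω), where both sides are taken as values in [0,∞]. (Lower semicontinuity of the weighted nonlocal energy F^s; no triangle inequality on the coefficients σ_{i,j} is assumed.) -/
open MeasureTheory Filter ENNReal

/-- The nonlocal interaction `L^s(A,B) = ∫_A ∫_B |x-y|^{-(n+s)} dy dx ∈ [0,∞]`. -/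
noncomputable def Ls (n : ℕ) (s : ℝ) (A B : Set (EuclideanSpace ℝ (Fin n))) : ℝ≥0∞ :=
  ∫⁻ x in A, ∫⁻ y in B, ENNReal.ofReal (1 / ‖x - y‖ ^ ((n : ℝ) + s))

/-- The nonlocal area `Per^s_Ω(A,B)`. -/
noncomputable def nlArea (n : ℕ) (s : ℝ) (Ω A B : Set (EuclideanSpace ℝ (Fin n))) : ℝ≥0∞ :=
  Ls n s (A ∩ Ω) (B ∩ Ω) + Ls n s (A ∩ Ω) (B ∩ Ωᶜ) + Ls n s (A ∩ Ωᶜ) (B ∩ Ω)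

/-- An admissible triple (3-part partition of `ℝⁿ` up to null sets). -/
def Admissible (n : ℕ) (Em E0 E1 : Set (EuclideanSpace ℝ (Fin n))) : Prop :=
  MeasurableSet Em ∧ MeasurableSet E0 ∧ MeasurableSet E1 ∧
  volume ((Em ∪ E0 ∪ E1)ᶜ) = 0 ∧
  volume (Em ∩ E0) = 0 ∧ volume (Em ∩ E1) = 0 ∧ volume (E0 ∩ E1) = 0

/-- The weighted nonlocal energy
`F^s(E,Ω) = σ_{-1,0} Per^s_Ω(E₋₁,E₀) + σ_{0,1} Per^s_Ω(E₀,E₁) + σ_{-1,1} Per^s_Ω(E₋₁,E₁)`. -/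
noncomputable def Fs (n : ℕ) (s σm0 σ01 σm1 : ℝ)
    (Ω Em E0 E1 : Set (EuclideanSpace ℝ (Fin n))) : ℝ≥0∞ :=
  ENNReal.ofReal σm0 * nlArea n s Ω Em E0 + ENNReal.ofReal σ01 * nlArea n s Ω E0 E1 +
    ENNReal.ofReal σm1 * nlArea n s Ω Em E1

/-- `χ_{E^k} → χ_E` in `L¹_loc(ℝⁿ)`. -/
def TendstoL1loc (n : ℕ) (Ek : ℕ → Set (EuclideanSpace ℝ (Fin n)))
    (E : Set (EuclideanSpace ℝ (Fin n))) : Prop :=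
  ∀ K : Set (EuclideanSpace ℝ (Fin n)), IsCompact K →
    Tendsto (fun k => volume (symmDiff (Ek k) E ∩ K)) atTop (nhds 0)

/-!
L¹_loc convergence does not give pointwise convergence, but every subsequence has a further
subsequence along which the indicator functions converge almost everywhere (Borel–Cantelli on
an exhaustion of `ℝⁿ` by compact sets). Along it, Fatou's lemma in each variable of the
iterated integral shows that every interaction `L^s(A ∩ U, B ∩ V)` is lower semicontinuous.
The energy is a combination with nonnegative weights of such interactions, and `liminf` is
superadditive, so it is lower semicontinuous along every such subsequence; since every
subsequence contains one, the `liminf` of the whole sequence is bounded below as well.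
-/

open Topology Function Set

theorem le_liminf_of_forall_subseq {α β : Type*} [CompleteLinearOrder α] [TopologicalSpace α]
    [OrderTopology α] [FirstCountableTopology α] {l : Filter β} [l.NeBot] [l.IsCountablyGenerated]
    {u : β → α} {a : α}
    (h : ∀ φ : ℕ → β, Tendsto φ atTop l →
      ∃ ψ : ℕ → ℕ, Tendsto ψ atTop atTop ∧ a ≤ liminf (fun j => u (φ (ψ j))) atTop) :
    a ≤ liminf u l := by
  obtain ⟨φ, hlim, hφ⟩ := exists_seq_tendsto_liminf (u := u) (f := l)
  obtain ⟨ψ, hψ, ha⟩ := h φ hφ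
  exact ha.trans_eq (hlim.comp hψ).liminf_eq

section NullOnCompacts

variable {α : Type*} [TopologicalSpace α] [MeasurableSpace α] {μ : Measure α}
  {D D' : ℕ → Set α}

/-- For `D k = E k ∆ E` and Lebesgue measure this is `TendstoL1loc`, definitionally. -/
def TendstoNullOnCompacts (μ : Measure α) (D : ℕ → Set α) : Prop :=
  ∀ K, IsCompact K → Tendsto (fun k => μ (D k ∩ K)) atTop (𝓝 0)

theorem TendstoNullOnCompacts.union (hD : TendstoNullOnCompacts μ D)
    (hD' : TendstoNullOnCompacts μ D') : TendstoNullOnCompacts μ fun k => D k ∪ D' k :=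
  fun K hK => tendsto_of_tendsto_of_tendsto_of_le_of_le tendsto_const_nhds
    (by simpa using (hD K hK).add (hD' K hK)) (fun _ => bot_le)
    fun k => (measure_mono (union_inter_distrib_right _ _ _).le).trans (measure_union_le _ _)

theorem TendstoNullOnCompacts.comp (hD : TendstoNullOnCompacts μ D) {φ : ℕ → ℕ}
    (hφ : Tendsto φ atTop atTop) : TendstoNullOnCompacts μ (D ∘ φ) :=
  fun K hK => (hD K hK).comp hφ

theorem TendstoNullOnCompacts.exists_strictMono_ae_eventually_notMem [SigmaCompactSpace α]
    (hD : TendstoNullOnCompacts μ D) :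
    ∃ φ : ℕ → ℕ, StrictMono φ ∧ ∀ᵐ x ∂μ, ∀ᶠ j in atTop, x ∉ D (φ j) := by
  have hsmall : ∀ j, ∀ᶠ k in atTop, μ (D k ∩ compactCovering α j) ≤ 2⁻¹ ^ j := fun j =>
    ((hD _ (isCompact_compactCovering α j)).eventually_lt_const
      (ENNReal.pow_pos (ENNReal.inv_pos.2 ofNat_ne_top) j)).mono fun _ => le_of_lt
  obtain ⟨φ, hφ, hφsmall⟩ := extraction_forall_of_eventually hsmall
  have hsum : ∑' j, μ (D (φ j) ∩ compactCovering α j) ≠ ∞ :=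
    ne_top_of_le_ne_top (by simp [ENNReal.tsum_geometric, ENNReal.one_sub_inv_two])
      (ENNReal.tsum_le_tsum hφsmall)
  refine ⟨φ, hφ, ?_⟩
  -- Borel–Cantelli: a.e. `x` eventually avoids `D (φ j) ∩ K j`, and eventually lies in `K j`.
  filter_upwards [ae_eventually_notMem hsum] with x hx
  obtain ⟨j₀, hj₀⟩ := exists_mem_compactCovering x
  filter_upwards [hx, eventually_ge_atTop j₀] with j hj hj₀j hxD
  exact hj ⟨hxD, compactCovering_subset α hj₀j hj₀⟩

end NullOnCompacts

section Fatou

variable {α β ι : Type*} [MeasurableSpace α] [MeasurableSpace β] {μ : Measure α} {ν : Measure β}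
  {l : Filter ι} [l.IsCountablyGenerated]

theorem setLIntegral_le_liminf_setLIntegral {A : Set α} {Ak : ι → Set α} {g : α → ℝ≥0∞}
    {gk : ι → α → ℝ≥0∞} (hA : MeasurableSet A) (hAk : ∀ k, MeasurableSet (Ak k))
    (hgk : ∀ k, Measurable (gk k)) (hmem : ∀ᵐ x ∂μ, ∀ᶠ k in l, (x ∈ Ak k ↔ x ∈ A))
    (hg : ∀ᵐ x ∂μ, g x ≤ liminf (fun k => gk k x) l) :
    ∫⁻ x in A, g x ∂μ ≤ liminf (fun k => ∫⁻ x in Ak k, gk k x ∂μ) l := by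
  simp only [← lintegral_indicator hA, ← lintegral_indicator (hAk _)]
  refine (lintegral_mono_ae ?_).trans (lintegral_liminf_le fun k => (hgk k).indicator (hAk k))
  filter_upwards [hmem, hg] with x hx hgx
  by_cases hxA : x ∈ A
  · rw [indicator_of_mem hxA]
    refine hgx.trans_eq (liminf_congr ?_)
    filter_upwards [hx] with k hk using (indicator_of_mem (hk.2 hxA) _).symm
  · simp [indicator_of_notMem hxA]

theorem setLIntegral_setLIntegral_le_liminf [SFinite ν] {f : α → β → ℝ≥0∞}
    (hf : Measurable (uncurry f)) {A : Set α} {B : Set β} {Ak : ι → Set α} {Bk : ι → Set β}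
    (hA : MeasurableSet A) (hB : MeasurableSet B) (hAk : ∀ k, MeasurableSet (Ak k))
    (hBk : ∀ k, MeasurableSet (Bk k)) (hmemA : ∀ᵐ x ∂μ, ∀ᶠ k in l, (x ∈ Ak k ↔ x ∈ A))
    (hmemB : ∀ᵐ y ∂ν, ∀ᶠ k in l, (y ∈ Bk k ↔ y ∈ B)) :
    ∫⁻ x in A, ∫⁻ y in B, f x y ∂ν ∂μ ≤
      liminf (fun k => ∫⁻ x in Ak k, ∫⁻ y in Bk k, f x y ∂ν ∂μ) l :=
  setLIntegral_le_liminf_setLIntegral hA hAk (fun _ => hf.lintegral_prod_right') hmemA <|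
    ae_of_all _ fun _ => setLIntegral_le_liminf_setLIntegral hB hBk
      (fun _ => hf.of_uncurry_left) hmemB <|
        ae_of_all _ fun _ => le_liminf_of_le (h := Eventually.of_forall fun _ => le_rfl)

end Fatou

theorem ENNReal.liminf_add_liminf_le {ι : Type*} {l : Filter ι} (u v : ι → ℝ≥0∞) :
    liminf u l + liminf v l ≤ liminf (fun k => u k + v k) l := by
  simp only [liminf_eq_iSup_iInf]
  refine ENNReal.biSup_add_biSup_le' ⟨univ, univ_mem⟩ ⟨univ, univ_mem⟩ fun s hs t ht => ?_
  exact le_iSup₂_of_le (s ∩ t) (inter_mem hs ht)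
    (le_iInf₂ fun k hk => add_le_add (iInf₂_le k hk.1) (iInf₂_le k hk.2))

theorem ENNReal.liminf_add_add_le {ι : Type*} {l : Filter ι} (u v w : ι → ℝ≥0∞) :
    liminf u l + liminf v l + liminf w l ≤ liminf (fun k => u k + v k + w k) l :=
  (add_le_add (liminf_add_liminf_le u v) le_rfl).trans (liminf_add_liminf_le _ w)

section Energy

variable {n : ℕ} {s : ℝ} {ι : Type*} {l : Filter ι} [l.IsCountablyGenerated]
  {Ω A B C : Set (EuclideanSpace ℝ (Fin n))} {Ak Bk Ck : ι → Set (EuclideanSpace ℝ (Fin n))}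

theorem Ls_le_liminf (hA : MeasurableSet A) (hB : MeasurableSet B)
    (hAk : ∀ k, MeasurableSet (Ak k)) (hBk : ∀ k, MeasurableSet (Bk k))
    (hmemA : ∀ᵐ x, ∀ᶠ k in l, (x ∈ Ak k ↔ x ∈ A)) (hmemB : ∀ᵐ y, ∀ᶠ k in l, (y ∈ Bk k ↔ y ∈ B)) :
    Ls n s A B ≤ liminf (fun k => Ls n s (Ak k) (Bk k)) l :=
  setLIntegral_setLIntegral_le_liminf (by fun_prop) hA hB hAk hBk hmemA hmemB

theorem nlArea_le_liminf (hΩ : MeasurableSet Ω) (hA : MeasurableSet A) (hB : MeasurableSet B)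
    (hAk : ∀ k, MeasurableSet (Ak k)) (hBk : ∀ k, MeasurableSet (Bk k))
    (hmemA : ∀ᵐ x, ∀ᶠ k in l, (x ∈ Ak k ↔ x ∈ A)) (hmemB : ∀ᵐ y, ∀ᶠ k in l, (y ∈ Bk k ↔ y ∈ B)) :
    nlArea n s Ω A B ≤ liminf (fun k => nlArea n s Ω (Ak k) (Bk k)) l := by
  have inter {E : Set _} {Ek : ι → Set _} (h : ∀ᵐ x, ∀ᶠ k in l, (x ∈ Ek k ↔ x ∈ E))
      (U : Set (EuclideanSpace ℝ (Fin n))) : ∀ᵐ x, ∀ᶠ k in l, (x ∈ Ek k ∩ U ↔ x ∈ E ∩ U) :=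
    h.mono fun _ hx => hx.mono fun _ => and_congr_left'
  have Ls_inter (U V : Set (EuclideanSpace ℝ (Fin n))) (hU : MeasurableSet U)
      (hV : MeasurableSet V) :
      Ls n s (A ∩ U) (B ∩ V) ≤ liminf (fun k => Ls n s (Ak k ∩ U) (Bk k ∩ V)) l :=
    Ls_le_liminf (hA.inter hU) (hB.inter hV) (fun k => (hAk k).inter hU)
      (fun k => (hBk k).inter hV) (inter hmemA U) (inter hmemB V)
  calc nlArea n s Ω A B
      ≤ liminf (fun k => Ls n s (Ak k ∩ Ω) (Bk k ∩ Ω)) l +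
          liminf (fun k => Ls n s (Ak k ∩ Ω) (Bk k ∩ Ωᶜ)) l +
          liminf (fun k => Ls n s (Ak k ∩ Ωᶜ) (Bk k ∩ Ω)) l :=
        add_le_add (add_le_add (Ls_inter _ _ hΩ hΩ) (Ls_inter _ _ hΩ hΩ.compl))
          (Ls_inter _ _ hΩ.compl hΩ)
    _ ≤ liminf (fun k => nlArea n s Ω (Ak k) (Bk k)) l := ENNReal.liminf_add_add_le _ _ _

theorem Fs_le_liminf [l.NeBot] {σm0 σ01 σm1 : ℝ} (hΩ : MeasurableSet Ω) (hA : MeasurableSet A)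
    (hB : MeasurableSet B) (hC : MeasurableSet C) (hAk : ∀ k, MeasurableSet (Ak k))
    (hBk : ∀ k, MeasurableSet (Bk k)) (hCk : ∀ k, MeasurableSet (Ck k))
    (hmemA : ∀ᵐ x, ∀ᶠ k in l, (x ∈ Ak k ↔ x ∈ A)) (hmemB : ∀ᵐ x, ∀ᶠ k in l, (x ∈ Bk k ↔ x ∈ B))
    (hmemC : ∀ᵐ x, ∀ᶠ k in l, (x ∈ Ck k ↔ x ∈ C)) :
    Fs n s σm0 σ01 σm1 Ω A B C ≤ liminf (fun k => Fs n s σm0 σ01 σm1 Ω (Ak k) (Bk k) (Ck k)) l := by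
  calc Fs n s σm0 σ01 σm1 Ω A B C
      ≤ liminf (fun k => ENNReal.ofReal σm0 * nlArea n s Ω (Ak k) (Bk k)) l +
          liminf (fun k => ENNReal.ofReal σ01 * nlArea n s Ω (Bk k) (Ck k)) l +
          liminf (fun k => ENNReal.ofReal σm1 * nlArea n s Ω (Ak k) (Ck k)) l := by
        simp only [ENNReal.liminf_const_mul_of_ne_top ofReal_ne_top, Fs]
        gcongr
        exacts [nlArea_le_liminf hΩ hA hB hAk hBk hmemA hmemB,
          nlArea_le_liminf hΩ hB hC hBk hCk hmemB hmemC,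
          nlArea_le_liminf hΩ hA hC hAk hCk hmemA hmemC]
    _ ≤ liminf (fun k => Fs n s σm0 σ01 σm1 Ω (Ak k) (Bk k) (Ck k)) l :=
        ENNReal.liminf_add_add_le _ _ _

end Energy

theorem lower_semicontinuity_Fs_general
    (n : ℕ) (s : ℝ)
    (Ω : Set (EuclideanSpace ℝ (Fin n))) (hΩo : IsOpen Ω)
    (σm0 σ01 σm1 : ℝ)
    (Emk E0k E1k : ℕ → Set (EuclideanSpace ℝ (Fin n)))
    (Em E0 E1 : Set (EuclideanSpace ℝ (Fin n)))
    (hadmk : ∀ k, Admissible n (Emk k) (E0k k) (E1k k))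
    (hadm : Admissible n Em E0 E1)
    (hconvm : TendstoL1loc n Emk Em) (hconv0 : TendstoL1loc n E0k E0)
    (hconv1 : TendstoL1loc n E1k E1) :
    Fs n s σm0 σ01 σm1 Ω Em E0 E1 ≤
      liminf (fun k => Fs n s σm0 σ01 σm1 Ω (Emk k) (E0k k) (E1k k)) atTop := by
  obtain ⟨hEm, hE0, hE1, -⟩ := hadm
  have hD : TendstoNullOnCompacts volume
      fun k => symmDiff (Emk k) Em ∪ symmDiff (E0k k) E0 ∪ symmDiff (E1k k) E1 :=
    (TendstoNullOnCompacts.union hconvm hconv0).union hconv1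
  refine le_liminf_of_forall_subseq fun φ hφ => ?_
  obtain ⟨ψ, hψ, hae⟩ := (hD.comp hφ).exists_strictMono_ae_eventually_notMem
  have hmem : ∀ᵐ x, ∀ᶠ j in atTop, (x ∈ Emk (φ (ψ j)) ↔ x ∈ Em) ∧
      (x ∈ E0k (φ (ψ j)) ↔ x ∈ E0) ∧ (x ∈ E1k (φ (ψ j)) ↔ x ∈ E1) := by
    filter_upwards [hae] with x hx
    filter_upwards [hx] with j hj
    simp only [comp_apply, mem_union, mem_symmDiff, not_or] at hj
    tauto
  exact ⟨ψ, hψ.tendsto_atTop, Fs_le_liminf hΩo.measurableSet hEm hE0 hE1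
    (fun _ => (hadmk _).1) (fun _ => (hadmk _).2.1) (fun _ => (hadmk _).2.2.1)
    (hmem.mono fun _ hx => hx.mono fun _ => And.left)
    (hmem.mono fun _ hx => hx.mono fun _ h => h.2.1)
    (hmem.mono fun _ hx => hx.mono fun _ h => h.2.2)⟩

/-- Lower semicontinuity of the weighted nonlocal energy `F^s`;
no triangle inequality is assumed on the coefficients. -/
theorem lower_semicontinuity_Fs
    (n : ℕ) (hn : 1 ≤ n) (s : ℝ) (hs : s ∈ Set.Ioo (0 : ℝ) 1)
    (Ω : Set (EuclideanSpace ℝ (Fin n))) (hΩo : IsOpen Ω) (hΩconn : IsConnected Ω)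
    (hΩb : Bornology.IsBounded Ω)
    (σm0 σ01 σm1 : ℝ) (hσm0 : 0 < σm0) (hσ01 : 0 < σ01) (hσm1 : 0 < σm1)
    (Emk E0k E1k : ℕ → Set (EuclideanSpace ℝ (Fin n)))
    (Em E0 E1 : Set (EuclideanSpace ℝ (Fin n)))
    (hadmk : ∀ k, Admissible n (Emk k) (E0k k) (E1k k))
    (hadm : Admissible n Em E0 E1)
    (hconvm : TendstoL1loc n Emk Em) (hconv0 : TendstoL1loc n E0k E0)
    (hconv1 : TendstoL1loc n E1k E1) :
    Fs n s σm0 σ01 σm1 Ω Em E0 E1 ≤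
      liminf (fun k => Fs n s σm0 σ01 σm1 Ω (Emk k) (E0k k) (E1k k)) atTop :=
  lower_semicontinuity_Fs_general n s Ω hΩo σm0 σ01 σm1 Emk E0k E1k Em E0 E1 hadmk hadm hconvm
    hconv0 hconv1
end

section
/- Let s ∈ (0,1), n ≥ 1, and let Ω ⊂ ℝⁿ be a bounded domain. If A ⊆ Ω and E ⊆ ℝⁿ are measurable sets with |E ∩ A| = 0, then Per^s_Ω(E ∪ A) + L^s(E, A) = Per^s_Ω(E) + L^s(A, Eᶜ ∩ Aᶜ), as an identity in [0,∞]. (Equivalently, when these quantities are finite, Per^s_Ω(E ∪ A) − Per^s_Ω(E) = L^s(A, Eᶜ ∩ Aᶜ) − L^s(E, A).) -/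
open MeasureTheory Filter ENNReal

/-- The fractional `s`-perimeter `Per^s_Ω(E) = Per^s_Ω(E, Eᶜ)`. -/
noncomputable def nlPer (n : ℕ) (s : ℝ) (Ω E : Set (EuclideanSpace ℝ (Fin n))) : ℝ≥0∞ :=
  nlArea n s Ω E Eᶜ

/-!
Both sides expand to the same sum. For `A ⊆ Ω` disjoint from `E` put `C = (E ∪ A)ᶜ`, so that
`Eᶜ = C ∪ A`. Since `A` lies inside `Ω`, additivity of `L^s` in each argument gives
`Per^s_Ω(E ∪ A, C) = Per^s_Ω(E, C) + L^s(A, C)` and `Per^s_Ω(E, C ∪ A) = Per^s_Ω(E, C) + L^s(E, A)`,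
and both sides of the identity equal `Per^s_Ω(E, C) + L^s(A, C) + L^s(E, A)`. In general `E` may
be replaced by `E \ A`, which is a.e. equal to it and disjoint from `A`.
-/

section SetLemmas

variable {α : Type*} {E A Ω : Set α}

lemma union_inter_eq_of_subset (hAΩ : A ⊆ Ω) : (E ∪ A) ∩ Ω = E ∩ Ω ∪ A := by
  rw [Set.union_inter_distrib_right, Set.inter_eq_left.mpr hAΩ]

lemma union_inter_compl_eq_of_subset (hAΩ : A ⊆ Ω) : (E ∪ A) ∩ Ωᶜ = E ∩ Ωᶜ := by
  rw [Set.union_inter_distrib_right, (Set.disjoint_compl_right_iff_subset.mpr hAΩ).inter_eq,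
    Set.union_empty]

end SetLemmas

section Interaction

variable {n : ℕ} {s : ℝ} {S S' T T' B Ω A E C : Set (EuclideanSpace ℝ (Fin n))}

lemma measurable_Ls_kernel :
    Measurable (Function.uncurry fun x y : EuclideanSpace ℝ (Fin n) =>
      ENNReal.ofReal (1 / ‖x - y‖ ^ ((n : ℝ) + s))) := by
  fun_prop

lemma measurable_lintegral_Ls_kernel (T : Set (EuclideanSpace ℝ (Fin n))) :
    Measurable fun x : EuclideanSpace ℝ (Fin n) =>
      ∫⁻ y in T, ENNReal.ofReal (1 / ‖x - y‖ ^ ((n : ℝ) + s)) :=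
  measurable_Ls_kernel.lintegral_prod_right

lemma Ls_congr_ae (hS : S =ᵐ[volume] S') (hT : T =ᵐ[volume] T') : Ls n s S T = Ls n s S' T' := by
  unfold Ls
  rw [Measure.restrict_congr_set hS]
  exact lintegral_congr fun x => by rw [Measure.restrict_congr_set hT]

lemma Ls_union_left (hT : MeasurableSet T) (hST : Disjoint S T) :
    Ls n s (S ∪ T) B = Ls n s S B + Ls n s T B :=
  lintegral_union hT hST

lemma Ls_union_right (hT : MeasurableSet T) (hST : Disjoint S T) :
    Ls n s B (S ∪ T) = Ls n s B S + Ls n s B T := by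
  unfold Ls
  simp_rw [lintegral_union hT hST]
  exact lintegral_add_left (measurable_lintegral_Ls_kernel S) _

lemma Ls_inter_add_inter_compl_left (hB : MeasurableSet B) :
    Ls n s (S ∩ B) T + Ls n s (S ∩ Bᶜ) T = Ls n s S T := by
  rw [← Set.sdiff_eq]
  exact lintegral_inter_add_sdiff _ S hB

lemma Ls_inter_add_inter_compl_right (hB : MeasurableSet B) :
    Ls n s S (T ∩ B) + Ls n s S (T ∩ Bᶜ) = Ls n s S T := by
  unfold Ls
  rw [← lintegral_add_left (measurable_lintegral_Ls_kernel _)]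
  simp_rw [← Set.sdiff_eq, lintegral_inter_add_sdiff _ T hB]

lemma nlArea_congr_ae (hS : S =ᵐ[volume] S') (hT : T =ᵐ[volume] T') :
    nlArea n s Ω S T = nlArea n s Ω S' T' := by
  unfold nlArea
  refine congr_arg₂ (· + ·) (congr_arg₂ (· + ·) ?_ ?_) ?_ <;>
    exact Ls_congr_ae (ae_eq_set_inter hS (ae_eq_refl _)) (ae_eq_set_inter hT (ae_eq_refl _))

lemma nlPer_congr_ae (hS : S =ᵐ[volume] S') : nlPer n s Ω S = nlPer n s Ω S' :=
  nlArea_congr_ae hS (ae_eq_set_compl_compl.mpr hS)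

lemma nlArea_union_left (hΩ : MeasurableSet Ω) (hA : MeasurableSet A) (hAΩ : A ⊆ Ω)
    (hEA : Disjoint E A) : nlArea n s Ω (E ∪ A) C = nlArea n s Ω E C + Ls n s A C := by
  have hEΩA : Disjoint (E ∩ Ω) A := hEA.mono_left Set.inter_subset_left
  rw [nlArea, union_inter_eq_of_subset hAΩ, union_inter_compl_eq_of_subset hAΩ,
    Ls_union_left hA hEΩA, Ls_union_left hA hEΩA,
    ← Ls_inter_add_inter_compl_right (S := A) (T := C) hΩ, nlArea]
  ring

lemma nlArea_union_right (hΩ : MeasurableSet Ω) (hA : MeasurableSet A) (hAΩ : A ⊆ Ω)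
    (hCA : Disjoint C A) : nlArea n s Ω E (C ∪ A) = nlArea n s Ω E C + Ls n s E A := by
  have hCΩA : Disjoint (C ∩ Ω) A := hCA.mono_left Set.inter_subset_left
  rw [nlArea, union_inter_eq_of_subset hAΩ, union_inter_compl_eq_of_subset hAΩ,
    Ls_union_right hA hCΩA, Ls_union_right hA hCΩA,
    ← Ls_inter_add_inter_compl_left (S := E) (T := A) hΩ, nlArea]
  ring

lemma nlPer_union_add_Ls_of_disjoint (hΩ : MeasurableSet Ω) (hA : MeasurableSet A)
    (hAΩ : A ⊆ Ω) (hEA : Disjoint E A) :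
    nlPer n s Ω (E ∪ A) + Ls n s E A = nlPer n s Ω E + Ls n s A (Eᶜ ∩ Aᶜ) := by
  have hEc : Eᶜ ∩ Aᶜ ∪ A = Eᶜ := by
    rw [← Set.sdiff_eq, Set.sdiff_union_of_subset hEA.subset_compl_left]
  have hright := nlArea_union_right (n := n) (s := s) (E := E) (C := Eᶜ ∩ Aᶜ) hΩ hA hAΩ
    (disjoint_compl_left.mono_left Set.inter_subset_right)
  rw [hEc] at hright
  rw [nlPer, nlPer, Set.compl_union, nlArea_union_left hΩ hA hAΩ hEA, hright]
  ring

end Interaction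

theorem nlPer_enlarge_identity_general
    (n : ℕ) (s : ℝ)
    (Ω : Set (EuclideanSpace ℝ (Fin n))) (hΩo : IsOpen Ω)
    (A E : Set (EuclideanSpace ℝ (Fin n))) (hA : MeasurableSet A)
    (hAΩ : A ⊆ Ω) (hEA : volume (E ∩ A) = 0) :
    nlPer n s Ω (E ∪ A) + Ls n s E A = nlPer n s Ω E + Ls n s A (Eᶜ ∩ Aᶜ) := by
  -- without the ascription, `E \ A` would elaborate in `EuclideanSpace ℝ (Fin n) → Prop`
  have hE : (E \ A : Set (EuclideanSpace ℝ (Fin n))) =ᵐ[volume] E := sdiff_ae_eq_self.mpr hEA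
  have hcompl : (E \ A)ᶜ ∩ Aᶜ = Eᶜ ∩ Aᶜ := by
    rw [Set.compl_sdiff, Set.union_inter_distrib_right, Set.inter_compl_self, Set.empty_union]
  have key := nlPer_union_add_Ls_of_disjoint (n := n) (s := s) hΩo.measurableSet hA hAΩ
    (Set.disjoint_sdiff_left (s := A) (t := E))
  rwa [Set.sdiff_union_self, hcompl, nlPer_congr_ae hE, Ls_congr_ae hE (ae_eq_refl A)] at key

/-- For `A ⊆ Ω`, `E` measurable with `|E ∩ A| = 0`,
`Per^s_Ω(E ∪ A) + L^s(E, A) = Per^s_Ω(E) + L^s(A, Eᶜ ∩ Aᶜ)`. -/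
theorem nlPer_enlarge_identity
    (n : ℕ) (hn : 1 ≤ n) (s : ℝ) (hs : s ∈ Set.Ioo (0 : ℝ) 1)
    (Ω : Set (EuclideanSpace ℝ (Fin n))) (hΩo : IsOpen Ω) (hΩconn : IsConnected Ω)
    (hΩb : Bornology.IsBounded Ω)
    (A E : Set (EuclideanSpace ℝ (Fin n))) (hA : MeasurableSet A) (hE : MeasurableSet E)
    (hAΩ : A ⊆ Ω) (hEA : volume (E ∩ A) = 0) :
    nlPer n s Ω (E ∪ A) + Ls n s E A = nlPer n s Ω E + Ls n s A (Eᶜ ∩ Aᶜ) :=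
  nlPer_enlarge_identity_general n s Ω hΩo A E hA hAΩ hEA
end

section
/- Let s ∈ (0,1), n ≥ 1, Ω ⊂ ℝⁿ a bounded domain, and let E = {E₋₁, E₀, E₁} be admissible. Let A ⊆ E₁ ∩ Ω be measurable and define Ẽ₋₁ = E₋₁, Ẽ₁ = E₁ ∩ Aᶜ, Ẽ₀ = E₀ ∪ A. If F^s(E, Ω) < ∞ and F^s(Ẽ, Ω) < ∞, then all the L^s-terms below are finite and F^s(E, Ω) − F^s(Ẽ, Ω) = −2α₀ L^s(A, E₋₁) + σ_{0,1}[L^s(A, E₁ᶜ) − L^s(A, E₁ ∩ Aᶜ)]. -/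
open MeasureTheory Filter ENNReal

section AuxLemmas

variable {n : ℕ} {s : ℝ}

lemma ker_meas (n : ℕ) (s : ℝ) :
    Measurable (fun p : EuclideanSpace ℝ (Fin n) × EuclideanSpace ℝ (Fin n) =>
      ENNReal.ofReal (1 / ‖p.1 - p.2‖ ^ ((n : ℝ) + s))) := by
  fun_prop

lemma Ls_symm (A B : Set (EuclideanSpace ℝ (Fin n))) : Ls n s A B = Ls n s B A := by
  rw [Ls, Ls, lintegral_lintegral_swap ((ker_meas n s).aemeasurable)]
  exact lintegral_congr fun y => lintegral_congr fun x => by rw [norm_sub_rev]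

lemma restrict_union_ae {B C : Set (EuclideanSpace ℝ (Fin n))} (hB : MeasurableSet B)
    (hC : MeasurableSet C) (h : volume (B ∩ C) = 0) :
    (volume : Measure (EuclideanSpace ℝ (Fin n))).restrict (B ∪ C) =
      volume.restrict B + volume.restrict C := by
  rw [← Set.union_diff_self, Measure.restrict_union Set.disjoint_sdiff_right (hC.diff hB)]
  congr 1
  refine Measure.restrict_congr_set ?_
  rw [diff_ae_eq_self, Set.inter_comm]
  exact h

lemma Ls_union_left_s9 {B C : Set (EuclideanSpace ℝ (Fin n))} (hB : MeasurableSet B)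
    (hC : MeasurableSet C) (h : volume (B ∩ C) = 0) (A : Set (EuclideanSpace ℝ (Fin n))) :
    Ls n s (B ∪ C) A = Ls n s B A + Ls n s C A := by
  rw [Ls, restrict_union_ae hB hC h, lintegral_add_measure]; rfl

lemma Ls_union_right_s9 {B C : Set (EuclideanSpace ℝ (Fin n))} (hB : MeasurableSet B)
    (hC : MeasurableSet C) (h : volume (B ∩ C) = 0) (A : Set (EuclideanSpace ℝ (Fin n))) :
    Ls n s A (B ∪ C) = Ls n s A B + Ls n s A C := by
  rw [Ls_symm, Ls_union_left_s9 hB hC h, Ls_symm B A, Ls_symm C A]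

lemma Ls_congr_right {B C : Set (EuclideanSpace ℝ (Fin n))} (h : B =ᵐ[volume] C)
    (A : Set (EuclideanSpace ℝ (Fin n))) : Ls n s A B = Ls n s A C :=
  lintegral_congr fun _ => setLIntegral_congr h

lemma Ls_zero_right {B : Set (EuclideanSpace ℝ (Fin n))} (h : volume B = 0)
    (A : Set (EuclideanSpace ℝ (Fin n))) : Ls n s A B = 0 := by
  simp [Ls, setLIntegral_measure_zero _ _ h]

lemma Ls_mono {A A' B B' : Set (EuclideanSpace ℝ (Fin n))} (hA : A ⊆ A') (hB : B ⊆ B') :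
    Ls n s A B ≤ Ls n s A' B' :=
  lintegral_mono' (Measure.restrict_mono hA le_rfl)
    (fun _ => lintegral_mono' (Measure.restrict_mono hB le_rfl) le_rfl)

lemma pos_mul_ne_top {σ : ℝ} (hσ : 0 < σ) {P : ℝ≥0∞} (h : ENNReal.ofReal σ * P ≠ ⊤) :
    P ≠ ⊤ := by
  intro hP
  rw [hP, ENNReal.mul_top (ENNReal.ofReal_pos.mpr hσ).ne'] at h
  exact h rfl

lemma final_algebra {Pm0 P01 Pm1 Qm0 Q01 Qm1 LmA L0A LA1c LAEm LAE0 LAE1c : ℝ≥0∞}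
    {σm0 σ01 σm1 : ℝ} (hσm0 : 0 < σm0) (hσ01 : 0 < σ01) (hσm1 : 0 < σm1)
    (c1 : Qm0 = Pm0 + LmA) (c2 : Pm1 = Qm1 + LmA) (c3 : Q01 + L0A = P01 + LA1c)
    (c4 : LAE1c = LAEm + LAE0)
    (symm1 : LmA = LAEm) (symm2 : L0A = LAE0)
    (hFE : ENNReal.ofReal σm0 * Pm0 + ENNReal.ofReal σ01 * P01 + ENNReal.ofReal σm1 * Pm1 ≠ ⊤)
    (hFE' : ENNReal.ofReal σm0 * Qm0 + ENNReal.ofReal σ01 * Q01 + ENNReal.ofReal σm1 * Qm1 ≠ ⊤)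
    (fLAEm : LAEm ≠ ⊤) (fLAE0 : LAE0 ≠ ⊤) (fLA1c : LA1c ≠ ⊤) :
    (ENNReal.ofReal σm0 * Pm0 + ENNReal.ofReal σ01 * P01 + ENNReal.ofReal σm1 * Pm1).toReal -
      (ENNReal.ofReal σm0 * Qm0 + ENNReal.ofReal σ01 * Q01 + ENNReal.ofReal σm1 * Qm1).toReal =
      -2 * ((σm0 + σ01 - σm1) / 2) * LAEm.toReal + σ01 * (LAE1c.toReal - LA1c.toReal) := by
  subst symm1 symm2
  have c3m : ENNReal.ofReal σ01 * Q01 + ENNReal.ofReal σ01 * L0A =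
      ENNReal.ofReal σ01 * P01 + ENNReal.ofReal σ01 * LA1c := by
    rw [← mul_add, ← mul_add, c3]
  have master :
      (ENNReal.ofReal σm0 * Pm0 + ENNReal.ofReal σ01 * P01 + ENNReal.ofReal σm1 * Pm1) +
        ENNReal.ofReal σm0 * LmA + ENNReal.ofReal σ01 * LA1c =
      (ENNReal.ofReal σm0 * Qm0 + ENNReal.ofReal σ01 * Q01 + ENNReal.ofReal σm1 * Qm1) +
        ENNReal.ofReal σ01 * L0A + ENNReal.ofReal σm1 * LmA := by
    rw [c1, c2]
    calc (ENNReal.ofReal σm0 * Pm0 + ENNReal.ofReal σ01 * P01 +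
            ENNReal.ofReal σm1 * (Qm1 + LmA)) +
          ENNReal.ofReal σm0 * LmA + ENNReal.ofReal σ01 * LA1c
        = (ENNReal.ofReal σ01 * P01 + ENNReal.ofReal σ01 * LA1c) +
            (ENNReal.ofReal σm0 * Pm0 + ENNReal.ofReal σm1 * Qm1 +
              ENNReal.ofReal σm1 * LmA + ENNReal.ofReal σm0 * LmA) := by ring
      _ = (ENNReal.ofReal σ01 * Q01 + ENNReal.ofReal σ01 * L0A) +
            (ENNReal.ofReal σm0 * Pm0 + ENNReal.ofReal σm1 * Qm1 +
              ENNReal.ofReal σm1 * LmA + ENNReal.ofReal σm0 * LmA) := by rw [c3m]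
      _ = (ENNReal.ofReal σm0 * (Pm0 + LmA) + ENNReal.ofReal σ01 * Q01 +
            ENNReal.ofReal σm1 * Qm1) + ENNReal.ofReal σ01 * L0A +
            ENNReal.ofReal σm1 * LmA := by ring
  have h := congrArg ENNReal.toReal master
  rw [ENNReal.toReal_add
        (ENNReal.add_ne_top.mpr ⟨hFE, ENNReal.mul_ne_top ENNReal.ofReal_ne_top fLAEm⟩)
        (ENNReal.mul_ne_top ENNReal.ofReal_ne_top fLA1c),
      ENNReal.toReal_add hFE (ENNReal.mul_ne_top ENNReal.ofReal_ne_top fLAEm),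
      ENNReal.toReal_add
        (ENNReal.add_ne_top.mpr ⟨hFE', ENNReal.mul_ne_top ENNReal.ofReal_ne_top fLAE0⟩)
        (ENNReal.mul_ne_top ENNReal.ofReal_ne_top fLAEm),
      ENNReal.toReal_add hFE' (ENNReal.mul_ne_top ENNReal.ofReal_ne_top fLAE0),
      ENNReal.toReal_mul, ENNReal.toReal_mul, ENNReal.toReal_mul, ENNReal.toReal_mul,
      ENNReal.toReal_ofReal hσm0.le, ENNReal.toReal_ofReal hσ01.le,
      ENNReal.toReal_ofReal hσm1.le] at h
  have c4R : LAE1c.toReal = LmA.toReal + L0A.toReal := by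
    rw [c4, ENNReal.toReal_add fLAEm fLAE0]
  linear_combination h - σ01 * c4R

end AuxLemmas

set_option maxHeartbeats 2000000 in
/-- Difference in energy when covering `A ⊆ E₁ ∩ Ω` with phase `0`:
with `Ẽ₋₁ = E₋₁`, `Ẽ₁ = E₁ ∩ Aᶜ`, `Ẽ₀ = E₀ ∪ A`, if both energies are finite then the
interaction terms are finite and
`F^s(E) − F^s(Ẽ) = −2α₀ L(A,E₋₁) + σ_{0,1}[L(A,E₁ᶜ) − L(A,E₁∩Aᶜ)]`. -/


theorem energy_difference_one_sided_strip
    (n : ℕ) (hn : 1 ≤ n) (s : ℝ) (hs : s ∈ Set.Ioo (0 : ℝ) 1)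
    (Ω : Set (EuclideanSpace ℝ (Fin n))) (hΩo : IsOpen Ω) (hΩconn : IsConnected Ω)
    (hΩb : Bornology.IsBounded Ω)
    (σm0 σ01 σm1 : ℝ) (hσm0 : 0 < σm0) (hσ01 : 0 < σ01) (hσm1 : 0 < σm1)
    (Em E0 E1 : Set (EuclideanSpace ℝ (Fin n))) (hadm : Admissible n Em E0 E1)
    (A : Set (EuclideanSpace ℝ (Fin n))) (hA : MeasurableSet A)
    (hAsub : A ⊆ E1 ∩ Ω)
    (hfin : Fs n s σm0 σ01 σm1 Ω Em E0 E1 ≠ ⊤)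
    (hfin' : Fs n s σm0 σ01 σm1 Ω Em (E0 ∪ A) (E1 ∩ Aᶜ) ≠ ⊤) :
    Ls n s A Em ≠ ⊤ ∧ Ls n s A E1ᶜ ≠ ⊤ ∧ Ls n s A (E1 ∩ Aᶜ) ≠ ⊤ ∧
    (Fs n s σm0 σ01 σm1 Ω Em E0 E1).toReal -
        (Fs n s σm0 σ01 σm1 Ω Em (E0 ∪ A) (E1 ∩ Aᶜ)).toReal =
      -2 * ((σm0 + σ01 - σm1) / 2) * (Ls n s A Em).toReal +
        σ01 * ((Ls n s A E1ᶜ).toReal - (Ls n s A (E1 ∩ Aᶜ)).toReal) := by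
  obtain ⟨hEm, hE0, hE1, hnullC, hm0, hm1, h01⟩ := hadm
  have hΩm : MeasurableSet Ω := hΩo.measurableSet
  have hAE1 : A ⊆ E1 := fun x hx => (hAsub hx).1
  have hAΩ : A ⊆ Ω := fun x hx => (hAsub hx).2
  -- null intersections
  have nE0A : volume (E0 ∩ A) = 0 := by
    refine measure_mono_null ?_ h01
    rintro x ⟨h0, ha⟩
    exact ⟨h0, hAE1 ha⟩
  have n0ΩA : volume ((E0 ∩ Ω) ∩ A) = 0 := by
    refine measure_mono_null ?_ nE0A
    rintro x ⟨⟨h0, -⟩, ha⟩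
    exact ⟨h0, ha⟩
  have n1ΩA : volume (((E1 ∩ Aᶜ) ∩ Ω) ∩ A) = 0 := by
    have he : ((E1 ∩ Aᶜ) ∩ Ω) ∩ A = ∅ := by
      ext x
      simp only [Set.mem_inter_iff, Set.mem_compl_iff, Set.mem_empty_iff_false, iff_false,
        not_and]
      rintro ⟨⟨-, h⟩, -⟩ h'
      exact h h'
    rw [he]; exact measure_empty
  have nΩsplit : ∀ T U : Set (EuclideanSpace ℝ (Fin n)),
      volume ((T ∩ Ω) ∩ (U ∩ Ωᶜ)) = 0 := by
    intro T U
    have he : (T ∩ Ω) ∩ (U ∩ Ωᶜ) = ∅ := by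
      ext x
      simp only [Set.mem_inter_iff, Set.mem_compl_iff, Set.mem_empty_iff_false, iff_false,
        not_and]
      rintro ⟨-, h⟩ - h'
      exact h' h
    rw [he]; exact measure_empty
  -- set identities
  have sAΩ : A ∩ Ω = A := Set.inter_eq_self_of_subset_left hAΩ
  have s1 : (E0 ∪ A) ∩ Ω = (E0 ∩ Ω) ∪ A := by
    rw [Set.union_inter_distrib_right, sAΩ]
  have s2 : (E0 ∪ A) ∩ Ωᶜ = E0 ∩ Ωᶜ := by
    ext x
    simp only [Set.mem_inter_iff, Set.mem_union, Set.mem_compl_iff]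
    constructor
    · rintro ⟨h0 | ha, hc⟩
      · exact ⟨h0, hc⟩
      · exact absurd (hAΩ ha) hc
    · rintro ⟨h0, hc⟩
      exact ⟨Or.inl h0, hc⟩
  have s3 : E1 ∩ Ω = (E1 ∩ Aᶜ) ∩ Ω ∪ A := by
    ext x
    simp only [Set.mem_inter_iff, Set.mem_union, Set.mem_compl_iff]
    constructor
    · rintro ⟨h1, hΩx⟩
      by_cases hx : x ∈ A
      · exact Or.inr hx
      · exact Or.inl ⟨⟨h1, hx⟩, hΩx⟩
    · rintro (⟨⟨h1, -⟩, hΩx⟩ | hx)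
      · exact ⟨h1, hΩx⟩
      · exact ⟨hAE1 hx, hAΩ hx⟩
  have s4 : (E1 ∩ Aᶜ) ∩ Ωᶜ = E1 ∩ Ωᶜ := by
    ext x
    simp only [Set.mem_inter_iff, Set.mem_compl_iff]
    constructor
    · rintro ⟨⟨h1, -⟩, hc⟩
      exact ⟨h1, hc⟩
    · rintro ⟨h1, hc⟩
      exact ⟨⟨h1, fun ha => hc (hAΩ ha)⟩, hc⟩
  -- splittings of Ls along Ω
  have dEm : Ls n s Em A = Ls n s (Em ∩ Ω) A + Ls n s (Em ∩ Ωᶜ) A := by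
    conv_lhs => rw [← Set.inter_union_compl Em Ω]
    exact Ls_union_left_s9 (hEm.inter hΩm) (hEm.inter hΩm.compl) (nΩsplit Em Em) A
  have dE0 : Ls n s E0 A = Ls n s (E0 ∩ Ω) A + Ls n s (E0 ∩ Ωᶜ) A := by
    conv_lhs => rw [← Set.inter_union_compl E0 Ω]
    exact Ls_union_left_s9 (hE0.inter hΩm) (hE0.inter hΩm.compl) (nΩsplit E0 E0) A
  have m1A : MeasurableSet ((E1 ∩ Aᶜ) ∩ Ω) := (hE1.inter hA.compl).inter hΩm
  have dA1 : Ls n s A (E1 ∩ Aᶜ) = Ls n s A ((E1 ∩ Aᶜ) ∩ Ω) + Ls n s A (E1 ∩ Ωᶜ) := by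
    conv_lhs => rw [← Set.inter_union_compl (E1 ∩ Aᶜ) Ω, s4]
    exact Ls_union_right_s9 m1A (hE1.inter hΩm.compl) (nΩsplit (E1 ∩ Aᶜ) E1) A
  -- the three exchange identities
  have c1 : nlArea n s Ω Em (E0 ∪ A) = nlArea n s Ω Em E0 + Ls n s Em A := by
    simp only [nlArea]
    rw [s1, s2, Ls_union_right_s9 (hE0.inter hΩm) hA n0ΩA,
      Ls_union_right_s9 (hE0.inter hΩm) hA n0ΩA, dEm]
    ring
  have c2 : nlArea n s Ω Em E1 = nlArea n s Ω Em (E1 ∩ Aᶜ) + Ls n s Em A := by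
    simp only [nlArea]
    rw [s4]
    conv_lhs => rw [s3]
    rw [Ls_union_right_s9 m1A hA n1ΩA, Ls_union_right_s9 m1A hA n1ΩA, dEm]
    ring
  have c3 : nlArea n s Ω (E0 ∪ A) (E1 ∩ Aᶜ) + Ls n s E0 A =
      nlArea n s Ω E0 E1 + Ls n s A (E1 ∩ Aᶜ) := by
    simp only [nlArea]
    rw [s1, s2, s4, dE0, dA1]
    conv_rhs => rw [s3]
    rw [Ls_union_left_s9 (hE0.inter hΩm) hA n0ΩA, Ls_union_left_s9 (hE0.inter hΩm) hA n0ΩA,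
      Ls_union_right_s9 m1A hA n1ΩA, Ls_union_right_s9 m1A hA n1ΩA]
    ring
  -- the complement identity
  have mEm1c : MeasurableSet (Em ∩ E1ᶜ) := hEm.inter hE1.compl
  have mE0' : MeasurableSet ((Emᶜ ∩ E0) ∩ E1ᶜ) := (hEm.compl.inter hE0).inter hE1.compl
  have sE1c : E1ᶜ = (Em ∩ E1ᶜ ∪ (Emᶜ ∩ E0) ∩ E1ᶜ) ∪ (Em ∪ E0 ∪ E1)ᶜ := by
    ext x
    simp only [Set.mem_union, Set.mem_inter_iff, Set.mem_compl_iff]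
    tauto
  have aeem : (Em ∩ E1ᶜ : Set (EuclideanSpace ℝ (Fin n))) =ᵐ[volume] Em := by
    rw [MeasureTheory.ae_eq_set]
    constructor
    · have he : (Em ∩ E1ᶜ) \ Em = ∅ := by
        ext x
        simp only [Set.mem_diff, Set.mem_inter_iff, Set.mem_compl_iff,
          Set.mem_empty_iff_false, iff_false]
        tauto
      rw [he]; exact measure_empty
    · refine measure_mono_null ?_ hm1
      intro x hx
      exact ⟨hx.1, by_contra fun h1 => hx.2 ⟨hx.1, h1⟩⟩
  have aee0 : ((Emᶜ ∩ E0) ∩ E1ᶜ : Set (EuclideanSpace ℝ (Fin n))) =ᵐ[volume] E0 := by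
    rw [MeasureTheory.ae_eq_set]
    constructor
    · have he : ((Emᶜ ∩ E0) ∩ E1ᶜ) \ E0 = ∅ := by
        ext x
        simp only [Set.mem_diff, Set.mem_inter_iff, Set.mem_compl_iff,
          Set.mem_empty_iff_false, iff_false]
        tauto
      rw [he]; exact measure_empty
    · refine measure_mono_null ?_ (measure_union_null hm0 h01)
      intro x hx
      obtain ⟨h0, hn⟩ := hx
      by_cases hm : x ∈ Em
      · exact Or.inl ⟨hm, h0⟩
      · right
        refine ⟨h0, ?_⟩
        by_contra h1
        exact hn ⟨⟨hm, h0⟩, h1⟩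
  have nu1 : volume ((Em ∩ E1ᶜ) ∩ ((Emᶜ ∩ E0) ∩ E1ᶜ)) = 0 := by
    have he : (Em ∩ E1ᶜ) ∩ ((Emᶜ ∩ E0) ∩ E1ᶜ) = ∅ := by
      ext x
      simp only [Set.mem_inter_iff, Set.mem_compl_iff, Set.mem_empty_iff_false, iff_false]
      tauto
    rw [he]; exact measure_empty
  have nu2 : volume ((Em ∩ E1ᶜ ∪ (Emᶜ ∩ E0) ∩ E1ᶜ) ∩ (Em ∪ E0 ∪ E1)ᶜ) = 0 := by
    have he : (Em ∩ E1ᶜ ∪ (Emᶜ ∩ E0) ∩ E1ᶜ) ∩ (Em ∪ E0 ∪ E1)ᶜ = ∅ := by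
      ext x
      simp only [Set.mem_inter_iff, Set.mem_union, Set.mem_compl_iff,
        Set.mem_empty_iff_false, iff_false]
      tauto
    rw [he]; exact measure_empty
  have c4 : Ls n s A E1ᶜ = Ls n s A Em + Ls n s A E0 := by
    conv_lhs => rw [sE1c]
    rw [Ls_union_right_s9 (mEm1c.union mE0') ((hEm.union hE0).union hE1).compl nu2,
      Ls_zero_right hnullC, add_zero, Ls_union_right_s9 mEm1c mE0' nu1,
      Ls_congr_right aeem, Ls_congr_right aee0]
  -- finiteness
  have h₁ := ENNReal.add_ne_top.mp hfin
  have finm1 : nlArea n s Ω Em E1 ≠ ⊤ := pos_mul_ne_top hσm1 h₁.2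
  have fin01 : nlArea n s Ω E0 E1 ≠ ⊤ := pos_mul_ne_top hσ01 (ENNReal.add_ne_top.mp h₁.1).2
  have h₂ := ENNReal.add_ne_top.mp hfin'
  have fin01' : nlArea n s Ω (E0 ∪ A) (E1 ∩ Aᶜ) ≠ ⊤ :=
    pos_mul_ne_top hσ01 (ENNReal.add_ne_top.mp h₂.1).2
  have finAEm : Ls n s A Em ≠ ⊤ := by
    have e : Ls n s A Em = Ls n s A (Em ∩ Ω) + Ls n s A (Em ∩ Ωᶜ) := by
      conv_lhs => rw [← Set.inter_union_compl Em Ω]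
      exact Ls_union_right_s9 (hEm.inter hΩm) (hEm.inter hΩm.compl) (nΩsplit Em Em) A
    rw [e]
    refine ENNReal.add_ne_top.mpr ⟨ne_top_of_le_ne_top finm1 ?_, ne_top_of_le_ne_top finm1 ?_⟩
    · calc Ls n s A (Em ∩ Ω) = Ls n s (Em ∩ Ω) A := Ls_symm _ _
        _ ≤ Ls n s (Em ∩ Ω) (E1 ∩ Ω) := Ls_mono subset_rfl hAsub
        _ ≤ nlArea n s Ω Em E1 := by unfold nlArea; exact le_add_right le_self_add
    · calc Ls n s A (Em ∩ Ωᶜ) = Ls n s (Em ∩ Ωᶜ) A := Ls_symm _ _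
        _ ≤ Ls n s (Em ∩ Ωᶜ) (E1 ∩ Ω) := Ls_mono subset_rfl hAsub
        _ ≤ nlArea n s Ω Em E1 := by unfold nlArea; exact le_add_self
  have finAE0 : Ls n s A E0 ≠ ⊤ := by
    have e : Ls n s A E0 = Ls n s A (E0 ∩ Ω) + Ls n s A (E0 ∩ Ωᶜ) := by
      conv_lhs => rw [← Set.inter_union_compl E0 Ω]
      exact Ls_union_right_s9 (hE0.inter hΩm) (hE0.inter hΩm.compl) (nΩsplit E0 E0) A
    rw [e]
    refine ENNReal.add_ne_top.mpr ⟨ne_top_of_le_ne_top fin01 ?_, ne_top_of_le_ne_top fin01 ?_⟩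
    · calc Ls n s A (E0 ∩ Ω) = Ls n s (E0 ∩ Ω) A := Ls_symm _ _
        _ ≤ Ls n s (E0 ∩ Ω) (E1 ∩ Ω) := Ls_mono subset_rfl hAsub
        _ ≤ nlArea n s Ω E0 E1 := by unfold nlArea; exact le_add_right le_self_add
    · calc Ls n s A (E0 ∩ Ωᶜ) = Ls n s (E0 ∩ Ωᶜ) A := Ls_symm _ _
        _ ≤ Ls n s (E0 ∩ Ωᶜ) (E1 ∩ Ω) := Ls_mono subset_rfl hAsub
        _ ≤ nlArea n s Ω E0 E1 := by unfold nlArea; exact le_add_self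
  have finA1c : Ls n s A (E1 ∩ Aᶜ) ≠ ⊤ := by
    rw [dA1]
    refine ENNReal.add_ne_top.mpr ⟨ne_top_of_le_ne_top fin01' ?_, ne_top_of_le_ne_top fin01' ?_⟩
    · calc Ls n s A ((E1 ∩ Aᶜ) ∩ Ω)
          ≤ Ls n s ((E0 ∪ A) ∩ Ω) ((E1 ∩ Aᶜ) ∩ Ω) :=
            Ls_mono (fun x hx => ⟨Or.inr hx, hAΩ hx⟩) subset_rfl
        _ ≤ nlArea n s Ω (E0 ∪ A) (E1 ∩ Aᶜ) := by unfold nlArea; exact le_add_right le_self_add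
    · calc Ls n s A (E1 ∩ Ωᶜ) = Ls n s A ((E1 ∩ Aᶜ) ∩ Ωᶜ) := by rw [s4]
        _ ≤ Ls n s ((E0 ∪ A) ∩ Ω) ((E1 ∩ Aᶜ) ∩ Ωᶜ) :=
            Ls_mono (fun x hx => ⟨Or.inr hx, hAΩ hx⟩) subset_rfl
        _ ≤ nlArea n s Ω (E0 ∪ A) (E1 ∩ Aᶜ) := by unfold nlArea; exact le_add_right le_add_self
  have finAE1c : Ls n s A E1ᶜ ≠ ⊤ := by
    rw [c4]
    exact ENNReal.add_ne_top.mpr ⟨finAEm, finAE0⟩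
  refine ⟨finAEm, finAE1c, finA1c, ?_⟩
  simp only [Fs] at hfin hfin' ⊢
  exact final_algebra hσm0 hσ01 hσm1 c1 c2 c3 c4 (Ls_symm _ _) (Ls_symm _ _)
    hfin hfin' finAEm finAE0 finA1c
end

section
/- Let n ≥ 1, let Ω ⊂ ℝⁿ be a bounded domain, ε > 0, and let A, B ⊆ ℝⁿ be disjoint measurable sets such that dist(A ∩ Ω, B) ≥ ε and dist(A, B ∩ Ω) ≥ ε. Then lim_{s↗1} (1−s) Per^s_Ω(A, B) = 0. -/
open MeasureTheory Filter ENNReal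

/-!
Each of the three interactions in `Per^s_Ω(A,B)` pairs a subset of `Ω` with a set at distance
at least `ε` from it. For `|x - y| ≥ ε` and `s ∈ [1/2, 1]` the kernel `|x - y|^{-(n+s)}` is at most
`(1 + 1/ε)^{n+1} (1 + |x - y|)^{-(n+1/2)}`, which is integrable in `y` and independent of `s`.
Hence `Per^s_Ω(A,B)` is bounded by a multiple of `|Ω|` uniformly for `s` near `1`, and the factor
`1 - s` sends it to `0`.
-/

open Topology

lemma one_div_rpow_le_of_le {ε t a b r : ℝ} (hε : 0 < ε) (hεt : ε ≤ t) (ha : 0 ≤ a)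
    (har : a ≤ r) (hrb : r ≤ b) :
    1 / t ^ r ≤ (1 + 1 / ε) ^ b * (1 + t) ^ (-a) := by
  have ht : 0 < t := hε.trans_le hεt
  have hc : 1 ≤ 1 + 1 / ε := by simp only [le_add_iff_nonneg_right]; positivity
  have h1t : 1 + t ≤ (1 + 1 / ε) * t := by
    rw [add_mul, one_mul, div_mul_eq_mul_div, one_mul, add_comm]
    gcongr
    exact (one_le_div hε).mpr hεt
  calc 1 / t ^ r = (1 + 1 / ε) ^ r * ((1 + 1 / ε) * t) ^ (-r) := by
        rw [Real.mul_rpow (by positivity) ht.le, Real.rpow_neg (by positivity),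
          Real.rpow_neg ht.le]
        field_simp
    _ ≤ (1 + 1 / ε) ^ b * (1 + t) ^ (-r) := by
        gcongr ?_ * ?_
        · exact Real.rpow_le_rpow_of_exponent_le hc hrb
        · exact Real.rpow_le_rpow_of_nonpos (by positivity) h1t (by linarith)
    _ ≤ (1 + 1 / ε) ^ b * (1 + t) ^ (-a) := by gcongr; linarith

lemma measurable_ofReal_one_div_norm_sub_rpow (n : ℕ) (s : ℝ) :
    Measurable fun p : EuclideanSpace ℝ (Fin n) × EuclideanSpace ℝ (Fin n) =>
      ENNReal.ofReal (1 / ‖p.1 - p.2‖ ^ ((n : ℝ) + s)) := by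
  fun_prop

lemma Ls_comm (n : ℕ) (s : ℝ) (A B : Set (EuclideanSpace ℝ (Fin n))) :
    Ls n s A B = Ls n s B A := by
  unfold Ls
  rw [lintegral_lintegral_swap (measurable_ofReal_one_div_norm_sub_rpow n s).aemeasurable]
  simp_rw [norm_sub_rev]

noncomputable def kernelTailConst (n : ℕ) (ε : ℝ) : ℝ≥0∞ :=
  ENNReal.ofReal ((1 + 1 / ε) ^ ((n : ℝ) + 1)) *
    ∫⁻ z : EuclideanSpace ℝ (Fin n), ENNReal.ofReal ((1 + ‖z‖) ^ (-((n : ℝ) + 1 / 2)))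

lemma kernelTailConst_ne_top (n : ℕ) (ε : ℝ) : kernelTailConst n ε ≠ ∞ := by
  refine mul_ne_top ofReal_ne_top (finite_integral_one_add_norm ?_).ne
  rw [finrank_euclideanSpace_fin]
  linarith

lemma setLIntegral_ofReal_one_div_norm_sub_rpow_le {n : ℕ} {s ε : ℝ} (hε : 0 < ε)
    (hs : 1 / 2 ≤ s) (hs1 : s ≤ 1) {x : EuclideanSpace ℝ (Fin n)}
    {T : Set (EuclideanSpace ℝ (Fin n))} (hsep : ∀ y ∈ T, ε ≤ dist x y) :
    ∫⁻ y in T, ENNReal.ofReal (1 / ‖x - y‖ ^ ((n : ℝ) + s)) ≤ kernelTailConst n ε := by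
  calc ∫⁻ y in T, ENNReal.ofReal (1 / ‖x - y‖ ^ ((n : ℝ) + s))
      ≤ ∫⁻ y in T, ENNReal.ofReal ((1 + 1 / ε) ^ ((n : ℝ) + 1)) *
          ENNReal.ofReal ((1 + ‖x - y‖) ^ (-((n : ℝ) + 1 / 2))) := by
        refine setLIntegral_mono (by fun_prop) fun y hy => ?_
        rw [← ofReal_mul (by positivity)]
        refine ofReal_le_ofReal (one_div_rpow_le_of_le hε ?_ (by positivity) ?_ ?_)
        · rw [← dist_eq_norm]; exact hsep y hy
        all_goals linarith
    _ ≤ ∫⁻ y, ENNReal.ofReal ((1 + 1 / ε) ^ ((n : ℝ) + 1)) *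
          ENNReal.ofReal ((1 + ‖x - y‖) ^ (-((n : ℝ) + 1 / 2))) :=
        setLIntegral_le_lintegral _ _
    _ = kernelTailConst n ε := by
        rw [lintegral_const_mul' _ _ ofReal_ne_top, kernelTailConst]
        simp_rw [norm_sub_rev x]
        rw [lintegral_sub_right_eq_self
          (fun z => ENNReal.ofReal ((1 + ‖z‖) ^ (-((n : ℝ) + 1 / 2)))) x]

lemma Ls_le_kernelTailConst_mul_volume {n : ℕ} {s ε : ℝ} (hε : 0 < ε)
    (hs : 1 / 2 ≤ s) (hs1 : s ≤ 1) {S T : Set (EuclideanSpace ℝ (Fin n))}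
    (hsep : ∀ x ∈ S, ∀ y ∈ T, ε ≤ dist x y) :
    Ls n s S T ≤ kernelTailConst n ε * volume S :=
  calc Ls n s S T ≤ ∫⁻ _ in S, kernelTailConst n ε := setLIntegral_mono measurable_const
        fun x hx => setLIntegral_ofReal_one_div_norm_sub_rpow_le hε hs hs1 (hsep x hx)
    _ = kernelTailConst n ε * volume S := setLIntegral_const S _

lemma nlArea_le_of_separated {n : ℕ} {s ε : ℝ} (hε : 0 < ε) (hs : 1 / 2 ≤ s) (hs1 : s ≤ 1)
    {Ω A B : Set (EuclideanSpace ℝ (Fin n))}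
    (hsep1 : ∀ x ∈ A ∩ Ω, ∀ y ∈ B, ε ≤ dist x y)
    (hsep2 : ∀ x ∈ A, ∀ y ∈ B ∩ Ω, ε ≤ dist x y) :
    nlArea n s Ω A B ≤ 3 * (kernelTailConst n ε * volume Ω) := by
  have hΩ : ∀ S, kernelTailConst n ε * volume (S ∩ Ω) ≤ kernelTailConst n ε * volume Ω :=
    fun S => mul_le_mul_right (measure_mono Set.inter_subset_right) _
  have h1 := Ls_le_kernelTailConst_mul_volume (T := B ∩ Ω) hε hs hs1
    fun x hx y hy => hsep1 x hx y hy.1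
  have h2 := Ls_le_kernelTailConst_mul_volume (T := B ∩ Ωᶜ) hε hs hs1
    fun x hx y hy => hsep1 x hx y hy.1
  have h3 := Ls_le_kernelTailConst_mul_volume (T := A ∩ Ωᶜ) hε hs hs1
    fun y hy x hx => dist_comm x y ▸ hsep2 x hx.1 y hy
  rw [nlArea, Ls_comm n s (A ∩ Ωᶜ)]
  calc _ ≤ kernelTailConst n ε * volume Ω + kernelTailConst n ε * volume Ω +
        kernelTailConst n ε * volume Ω := by
        gcongr
        exacts [h1.trans (hΩ A), h2.trans (hΩ A), h3.trans (hΩ B)]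
    _ = 3 * (kernelTailConst n ε * volume Ω) := by ring

lemma tendsto_ofReal_one_sub_mul_of_eventually_le {l : Filter ℝ} (hl : l ≤ 𝓝 1)
    {f : ℝ → ℝ≥0∞} {C : ℝ≥0∞} (hC : C ≠ ∞) (hf : ∀ᶠ s in l, f s ≤ C) :
    Tendsto (fun s => ENNReal.ofReal (1 - s) * f s) l (𝓝 0) := by
  have h : Tendsto (fun s : ℝ => ENNReal.ofReal (1 - s)) l (𝓝 0) := by
    simpa using ENNReal.tendsto_ofReal (((tendsto_const_nhds (x := (1 : ℝ))).sub tendsto_id).mono_left hl)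
  refine tendsto_of_tendsto_of_tendsto_of_le_of_le' tendsto_const_nhds
    (by simpa using ENNReal.Tendsto.mul_const h (Or.inr hC)) (.of_forall fun _ => zero_le) ?_
  filter_upwards [hf] with s hs
  exact mul_le_mul_right hs _

theorem tendsto_one_sub_smul_nlArea_of_separated_general
    (n : ℕ)
    (Ω : Set (EuclideanSpace ℝ (Fin n)))
    (hΩb : Bornology.IsBounded Ω)
    (ε : ℝ) (hε : 0 < ε)
    (A B : Set (EuclideanSpace ℝ (Fin n)))
    (hsep1 : ∀ x ∈ A ∩ Ω, ∀ y ∈ B, ε ≤ dist x y)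
    (hsep2 : ∀ x ∈ A, ∀ y ∈ B ∩ Ω, ε ≤ dist x y) :
    Tendsto (fun s : ℝ => ENNReal.ofReal (1 - s) * nlArea n s Ω A B)
      (nhdsWithin 1 (Set.Ioo (0 : ℝ) 1)) (nhds 0) := by
  have hC : 3 * (kernelTailConst n ε * volume Ω) ≠ ∞ :=
    mul_ne_top ofNat_ne_top (mul_ne_top (kernelTailConst_ne_top n ε) hΩb.measure_lt_top.ne)
  refine tendsto_ofReal_one_sub_mul_of_eventually_le nhdsWithin_le_nhds hC ?_
  have hs : ∀ᶠ s : ℝ in nhdsWithin 1 (Set.Ioo 0 1), 1 / 2 < s :=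
    (eventually_gt_nhds (by norm_num)).filter_mono nhdsWithin_le_nhds
  filter_upwards [hs, self_mem_nhdsWithin] with s hs hs1
  exact nlArea_le_of_separated hε hs.le hs1.2.le hsep1 hsep2

/-- If the disjoint sets `A`, `B` satisfy `dist(A∩Ω, B) ≥ ε` and `dist(A, B∩Ω) ≥ ε`, then
`(1−s) Per^s_Ω(A,B) → 0` as `s ↗ 1`. -/
theorem tendsto_one_sub_smul_nlArea_of_separated
    (n : ℕ) (hn : 1 ≤ n)
    (Ω : Set (EuclideanSpace ℝ (Fin n))) (hΩo : IsOpen Ω) (hΩconn : IsConnected Ω)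
    (hΩb : Bornology.IsBounded Ω)
    (ε : ℝ) (hε : 0 < ε)
    (A B : Set (EuclideanSpace ℝ (Fin n))) (hA : MeasurableSet A) (hB : MeasurableSet B)
    (hAB : Disjoint A B)
    (hsep1 : ∀ x ∈ A ∩ Ω, ∀ y ∈ B, ε ≤ dist x y)
    (hsep2 : ∀ x ∈ A, ∀ y ∈ B ∩ Ω, ε ≤ dist x y) :
    Tendsto (fun s : ℝ => ENNReal.ofReal (1 - s) * nlArea n s Ω A B)
      (nhdsWithin 1 (Set.Ioo (0 : ℝ) 1)) (nhds 0) :=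
  tendsto_one_sub_smul_nlArea_of_separated_general n Ω hΩb ε hε A B hsep1 hsep2
end

section
/- Let s ∈ (0,1) and assume α₀ < 0 (i.e. σ_{−1,1} > σ_{−1,0} + σ_{0,1}). Let Ω ⊂ ℝ be a bounded domain with 0 ∈ Ω and let r > 0. Let E be an admissible triple of subsets of ℝ with (0, r) ⊆ E₁ and (−r, 0) ⊆ E₋₁. Then there exist C₀ > 0 (depending only on s) and ε₀ > 0 (depending on s, r, dist(0, ∂Ω) and the σ_{i,j}) such that for every ε ∈ (0, ε₀), the admissible triple E^ε defined by E₁^ε = E₁ \ (0, ε), E₀^ε = E₀ ∪ (0, ε), E₋₁^ε = E₋₁ satisfies F^s(E, Ω) ≥ F^s(E^ε, Ω) + C₀ |α₀| ε^{1−s}. -/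
open MeasureTheory Filter ENNReal

/-- The 1D nonlocal interaction `L^s(A,B) = ∫_A ∫_B |x-y|^{-(1+s)} dy dx ∈ [0,∞]`. -/
noncomputable def Ls1 (s : ℝ) (A B : Set ℝ) : ℝ≥0∞ :=
  ∫⁻ x in A, ∫⁻ y in B, ENNReal.ofReal (1 / |x - y| ^ (1 + s))

/-- The 1D nonlocal area `Per^s_Ω(A,B)`. -/
noncomputable def nlArea1 (s : ℝ) (Ω A B : Set ℝ) : ℝ≥0∞ :=
  Ls1 s (A ∩ Ω) (B ∩ Ω) + Ls1 s (A ∩ Ω) (B ∩ Ωᶜ) + Ls1 s (A ∩ Ωᶜ) (B ∩ Ω)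

/-- An admissible triple of subsets of `ℝ`. -/
def Admissible1 (Em E0 E1 : Set ℝ) : Prop :=
  MeasurableSet Em ∧ MeasurableSet E0 ∧ MeasurableSet E1 ∧
  volume ((Em ∪ E0 ∪ E1)ᶜ) = 0 ∧
  volume (Em ∩ E0) = 0 ∧ volume (Em ∩ E1) = 0 ∧ volume (E0 ∩ E1) = 0

/-- The 1D weighted nonlocal energy `F^s`. -/
noncomputable def Fs1 (s σm0 σ01 σm1 : ℝ) (Ω Em E0 E1 : Set ℝ) : ℝ≥0∞ :=
  ENNReal.ofReal σm0 * nlArea1 s Ω Em E0 + ENNReal.ofReal σ01 * nlArea1 s Ω E0 E1 +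
    ENNReal.ofReal σm1 * nlArea1 s Ω Em E1

/-!
Moving `I = (0, ε)` from phase `1` to phase `0` only changes the interactions of `I`: it
trades `σ₋₁₁ L(E₋₁, I) + σ₀₁ L(E₀, I)` for `σ₋₁₀ L(E₋₁, I) + σ₀₁ L(I, E₁ \ I)`. Writing
`σ₋₁₁ = σ₋₁₀ + σ₀₁ + 2|α₀|`, it suffices that `L(I, E₁ \ I) ≤ L(E₋₁, I) + O(r^{-s} ε)` and
`L(E₋₁, I) ≥ ε^{1-s}/4`. Up to a null set `E₁ \ I` lies in `(-∞, -r] ∪ [ε, ∞)`; the reflection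
`x ↦ ε - x` turns the interaction of `I` with `[ε, ∞)` into that with `(-∞, 0]`, and only the
tails beyond `-r` are not covered by `(-r, 0) ⊆ E₋₁`; they cost `O(r^{-s} ε)`. The lower bound
comes from the box `(-ε, 0) × (0, ε)`, where the kernel is at least `(2ε)^{-(1+s)}`. Finally
`ε = o(ε^{1-s})` as `ε → 0⁺`.
-/

open Set Topology

section Ls1

variable (s : ℝ)

lemma measurable_Ls1_kernel :
    Measurable fun p : ℝ × ℝ => ENNReal.ofReal (1 / |p.1 - p.2| ^ (1 + s)) := by
  fun_prop

lemma measurable_lintegral_Ls1_kernel (B : Set ℝ) :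
    Measurable fun x : ℝ => ∫⁻ y in B, ENNReal.ofReal (1 / |x - y| ^ (1 + s)) :=
  (measurable_Ls1_kernel s).lintegral_prod_right'

lemma Ls1_comm (A B : Set ℝ) : Ls1 s A B = Ls1 s B A := by
  unfold Ls1
  rw [lintegral_lintegral_swap (measurable_Ls1_kernel s).aemeasurable]
  simp_rw [abs_sub_comm]

variable {s}

lemma Ls1_mono_left {A A' : Set ℝ} (B : Set ℝ) (h : A ≤ᵐ[volume] A') :
    Ls1 s A B ≤ Ls1 s A' B :=
  lintegral_mono_set' h

lemma Ls1_mono_right (A : Set ℝ) {B B' : Set ℝ} (h : B ≤ᵐ[volume] B') :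
    Ls1 s A B ≤ Ls1 s A B' :=
  lintegral_mono fun _ => lintegral_mono_set' h

lemma Ls1_union_left {A A' : Set ℝ} (B : Set ℝ) (hd : AEDisjoint volume A A')
    (hA' : NullMeasurableSet A') : Ls1 s (A ∪ A') B = Ls1 s A B + Ls1 s A' B := by
  rw [Ls1, Measure.restrict_union₀ hd hA', lintegral_add_measure]; rfl

lemma Ls1_union_right (A : Set ℝ) {B B' : Set ℝ} (hd : AEDisjoint volume B B')
    (hB' : NullMeasurableSet B') : Ls1 s A (B ∪ B') = Ls1 s A B + Ls1 s A B' := by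
  rw [Ls1_comm, Ls1_union_left _ hd hB', Ls1_comm s B, Ls1_comm s B']

lemma Ls1_union_right_le (A B B' : Set ℝ) : Ls1 s A (B ∪ B') ≤ Ls1 s A B + Ls1 s A B' :=
  (lintegral_mono fun _ => lintegral_union_le _ _ _).trans_eq
    (lintegral_add_left (measurable_lintegral_Ls1_kernel s B) _)

lemma Ls1_preimage_sub_left (c : ℝ) (A B : Set ℝ) :
    Ls1 s ((c - ·) ⁻¹' A) ((c - ·) ⁻¹' B) = Ls1 s A B := by
  have hrefl := fun (S : Set ℝ) (f : ℝ → ℝ≥0∞) =>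
    (Measure.measurePreserving_sub_left volume c).setLIntegral_comp_preimage_emb
      (MeasurableEquiv.subLeft c).measurableEmbedding f S
  unfold Ls1
  rw [← hrefl A]
  congr! 2 with x
  rw [← hrefl B]
  congr! 2 with y
  rw [show c - x - (c - y) = y - x by ring, abs_sub_comm]

end Ls1

section nlArea1

variable {s : ℝ} {Ω : Set ℝ}

lemma nlArea1_comm (s : ℝ) (Ω A B : Set ℝ) : nlArea1 s Ω A B = nlArea1 s Ω B A := by
  simp only [nlArea1, Ls1_comm s (A ∩ _)]
  ring

lemma nlArea1_union_right (hΩ : MeasurableSet Ω) {A B I : Set ℝ} (hA : MeasurableSet A)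
    (hI : MeasurableSet I) (hIΩ : I ⊆ Ω) (hd : AEDisjoint volume B I) :
    nlArea1 s Ω A (B ∪ I) = nlArea1 s Ω A B + Ls1 s A I := by
  have hin : (B ∪ I) ∩ Ω = B ∩ Ω ∪ I := by
    rw [union_inter_distrib_right, inter_eq_self_of_subset_left hIΩ]
  have hout : (B ∪ I) ∩ Ωᶜ = B ∩ Ωᶜ := by
    rw [union_inter_distrib_right, (disjoint_compl_right.mono_left hIΩ).inter_eq, union_empty]
  have hsplit : Ls1 s A I = Ls1 s (A ∩ Ω) I + Ls1 s (A ∩ Ωᶜ) I := by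
    conv_lhs => rw [← inter_union_compl A Ω]
    exact Ls1_union_left I
      (disjoint_compl_right.mono inter_subset_right inter_subset_right).aedisjoint
      (hA.inter hΩ.compl).nullMeasurableSet
  have hdΩ := hd.mono (inter_subset_left (t := Ω)) subset_rfl
  rw [nlArea1, nlArea1, hin, hout, Ls1_union_right _ hdΩ hI.nullMeasurableSet,
    Ls1_union_right _ hdΩ hI.nullMeasurableSet, hsplit]
  ring

end nlArea1

section KernelBounds

variable {s : ℝ}

lemma lintegral_Ioi_kernel (hs : 0 < s) {c : ℝ} (hc : 0 < c) :
    ∫⁻ u in Ioi c, ENNReal.ofReal (1 / |u| ^ (1 + s)) = ENNReal.ofReal (c ^ (-s) / s) := by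
  have hlt : -(1 + s) < -1 := by linarith
  have hpow : ∀ u ∈ Ioi c,
      ENNReal.ofReal (1 / |u| ^ (1 + s)) = ENNReal.ofReal (u ^ (-(1 + s))) :=
    fun u hu => by
      rw [abs_of_pos (hc.trans hu), Real.rpow_neg (hc.trans hu).le, one_div]
  rw [setLIntegral_congr_fun measurableSet_Ioi hpow,
    ← ofReal_integral_eq_lintegral_ofReal (integrableOn_Ioi_rpow_of_lt hlt hc)
      (ae_restrict_of_forall_mem measurableSet_Ioi fun u hu => Real.rpow_nonneg (hc.trans hu).le _),
    integral_Ioi_rpow_of_lt hlt hc, show -(1 + s) + 1 = -s by ring, neg_div_neg_eq]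

lemma lintegral_Iic_kernel_le (hs : 0 < s) {r x : ℝ} (hr : 0 < r) (hx : 0 ≤ x) :
    ∫⁻ y in Iic (-r), ENNReal.ofReal (1 / |x - y| ^ (1 + s)) ≤
      ENNReal.ofReal (r ^ (-s) / s) := by
  have hpre : (x - ·) ⁻¹' Ici (x + r) = Iic (-r) := by
    ext y; simp only [mem_preimage, mem_Ici, mem_Iic]; constructor <;> intro <;> linarith
  rw [← hpre, (Measure.measurePreserving_sub_left volume x).setLIntegral_comp_preimage_emb
      (MeasurableEquiv.subLeft x).measurableEmbedding (fun u => ENNReal.ofReal (1 / |u| ^ (1 + s))),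
    ← setLIntegral_congr Ioi_ae_eq_Ici, lintegral_Ioi_kernel hs (by linarith)]
  exact ENNReal.ofReal_le_ofReal <| div_le_div_of_nonneg_right
    (Real.rpow_le_rpow_of_nonpos hr (by linarith) (by linarith)) hs.le

lemma Ls1_Iic_le (hs : 0 < s) {r : ℝ} (hr : 0 < r) {A : Set ℝ} (hA : A ⊆ Ici 0) :
    Ls1 s A (Iic (-r)) ≤ ENNReal.ofReal (r ^ (-s) / s) * volume A :=
  (setLIntegral_mono measurable_const fun _ hx => lintegral_Iic_kernel_le hs hr (hA hx)).trans_eq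
    (setLIntegral_const _ _)

/-- The positivity of `|x - y|` matters: on the diagonal the kernel takes the junk value
`1 / 0 = 0`. -/
lemma ofReal_mul_volume_mul_volume_le_Ls1 (hs : -1 ≤ s) {A B : Set ℝ} {d : ℝ}
    (hd : ∀ x ∈ A, ∀ y ∈ B, 0 < |x - y| ∧ |x - y| ≤ d) :
    ENNReal.ofReal (d ^ (-(1 + s))) * volume B * volume A ≤ Ls1 s A B := by
  have hkernel : ∀ x ∈ A, ∀ y ∈ B,
      ENNReal.ofReal (d ^ (-(1 + s))) ≤ ENNReal.ofReal (1 / |x - y| ^ (1 + s)) := by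
    intro x hx y hy
    obtain ⟨hpos, hle⟩ := hd x hx y hy
    gcongr
    rw [Real.rpow_neg (hpos.le.trans hle), ← one_div]
    gcongr
    linarith
  rw [← setLIntegral_const]
  refine setLIntegral_mono (measurable_lintegral_Ls1_kernel s B) fun x hx => ?_
  rw [← setLIntegral_const]
  exact setLIntegral_mono (by fun_prop) (hkernel x hx)

lemma ofReal_rpow_div_four_le_Ls1_Ioo (hs : s ∈ Icc (-1) 1) {ε : ℝ} (hε : 0 < ε) :
    ENNReal.ofReal (ε ^ (1 - s) / 4) ≤ Ls1 s (Ioo (-ε) 0) (Ioo 0 ε) := by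
  refine le_trans ?_ (ofReal_mul_volume_mul_volume_le_Ls1 (d := 2 * ε) hs.1 fun x hx y hy => ?_)
  · rw [Real.volume_Ioo, Real.volume_Ioo, ← ENNReal.ofReal_mul (by positivity),
      ← ENNReal.ofReal_mul (by positivity)]
    gcongr
    have htwo : (1 : ℝ) / 4 ≤ 2 ^ (-(1 + s)) := by
      rw [show (1 : ℝ) / 4 = 2 ^ (-2 : ℝ) by norm_num]
      exact Real.rpow_le_rpow_of_exponent_le (by norm_num) (by linarith [hs.2])
    have hε2 : ε ^ (-(1 + s)) * (ε - 0) * (0 - -ε) = ε ^ (1 - s) := by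
      rw [sub_zero, zero_sub, neg_neg, mul_assoc,
        show ε * ε = ε ^ (2 : ℝ) by rw [Real.rpow_two, sq], ← Real.rpow_add hε]
      ring_nf
    rw [Real.mul_rpow zero_le_two hε.le, mul_assoc, mul_assoc, ← mul_assoc (ε ^ _), hε2]
    nlinarith [Real.rpow_pos_of_pos hε (1 - s)]
  · rw [abs_sub_comm, abs_of_pos (by linarith [hx.2, hy.1])]
    constructor <;> linarith [hx.1, hx.2, hy.1, hy.2]

lemma Ls1_Ioo_Ici_eq_Ls1_Ioo_Iic (ε : ℝ) :
    Ls1 s (Ioo 0 ε) (Ici ε) = Ls1 s (Ioo 0 ε) (Iic 0) := by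
  have hI : (ε - ·) ⁻¹' Ioo 0 ε = Ioo 0 ε := by
    ext x; simp only [mem_preimage, mem_Ioo]
    constructor <;> rintro ⟨h1, h2⟩ <;> constructor <;> linarith
  have hJ : (ε - ·) ⁻¹' Iic 0 = Ici ε := by
    ext x; simp only [mem_preimage, mem_Iic, mem_Ici]; constructor <;> intro <;> linarith
  rw [← Ls1_preimage_sub_left ε (Ioo 0 ε) (Iic 0), hI, hJ]

end KernelBounds

lemma Ls1_Ioo_Iic_union_Ici_le {s r ε : ℝ} (hs : 0 < s) (hr : 0 < r) :
    Ls1 s (Ioo 0 ε) (Iic (-r) ∪ Ici ε) ≤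
      2 * (ENNReal.ofReal (r ^ (-s) / s) * volume (Ioo 0 ε)) + Ls1 s (Ioo (-r) 0) (Ioo 0 ε) := by
  have htail := Ls1_Iic_le hs hr (Ioo_subset_Ioi_self.trans Ioi_subset_Ici_self :
    Ioo 0 ε ⊆ Ici 0)
  have hnear : Ls1 s (Ioo 0 ε) (Iic 0) ≤
      Ls1 s (Ioo 0 ε) (Iic (-r)) + Ls1 s (Ioo (-r) 0) (Ioo 0 ε) :=
    calc Ls1 s (Ioo 0 ε) (Iic 0) = Ls1 s (Ioo 0 ε) (Iic (-r) ∪ Ioc (-r) 0) := by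
          rw [Iic_union_Ioc_eq_Iic (by linarith)]
      _ ≤ Ls1 s (Ioo 0 ε) (Iic (-r)) + Ls1 s (Ioo 0 ε) (Ioc (-r) 0) := Ls1_union_right_le _ _ _
      _ = Ls1 s (Ioo 0 ε) (Iic (-r)) + Ls1 s (Ioo (-r) 0) (Ioo 0 ε) := by
          rw [Ls1_comm s (Ioo (-r) 0), le_antisymm (Ls1_mono_right _ Ioo_ae_eq_Ioc.symm.le)
            (Ls1_mono_right _ Ioo_ae_eq_Ioc.le)]
  calc Ls1 s (Ioo 0 ε) (Iic (-r) ∪ Ici ε)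
      ≤ Ls1 s (Ioo 0 ε) (Iic (-r)) + Ls1 s (Ioo 0 ε) (Iic 0) := by
        rw [← Ls1_Ioo_Ici_eq_Ls1_Ioo_Iic]; exact Ls1_union_right_le _ _ _
    _ ≤ _ := by
        grw [hnear, htail]
        rw [two_mul, add_assoc]

lemma Admissible1.union_diff {Em E0 E1 I : Set ℝ} (h : Admissible1 Em E0 E1)
    (hI : MeasurableSet I) (hIE1 : I ⊆ E1) : Admissible1 Em (E0 ∪ I) (E1 \ I) := by
  obtain ⟨hEm, hE0, hE1, hcover, hm0, hm1, h01⟩ := h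
  refine ⟨hEm, hE0.union hI, hE1.diff hI, measure_mono_null ?_ hcover,
    measure_mono_null ?_ (measure_union_null hm0 hm1),
    measure_mono_null (inter_subset_inter_right _ sdiff_subset) hm1,
    measure_mono_null ?_ h01⟩
  · intro x hx hcov
    by_cases hxI : x ∈ I <;> simp_all
  · rintro x ⟨hxm, hx0 | hxI⟩
    exacts [Or.inl ⟨hxm, hx0⟩, Or.inr ⟨hxm, hIE1 hxI⟩]
  · rintro x ⟨hx0 | hxI, hx1, hxnI⟩
    exacts [⟨hx0, hx1⟩, absurd hxI hxnI]

lemma Fs1_union_diff_add_le {s σm0 σ01 σm1 : ℝ} {Ω Em E0 E1 I : Set ℝ} {g : ℝ≥0∞}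
    (hadm : Admissible1 Em E0 E1) (hΩ : MeasurableSet Ω) (hI : MeasurableSet I) (hIΩ : I ⊆ Ω)
    (hIE1 : I ⊆ E1)
    (h : ENNReal.ofReal σm0 * Ls1 s Em I + ENNReal.ofReal σ01 * Ls1 s I (E1 \ I) + g ≤
      ENNReal.ofReal σ01 * Ls1 s E0 I + ENNReal.ofReal σm1 * Ls1 s Em I) :
    Fs1 s σm0 σ01 σm1 Ω Em (E0 ∪ I) (E1 \ I) + g ≤ Fs1 s σm0 σ01 σm1 Ω Em E0 E1 := by
  obtain ⟨hEm, hE0, hE1, -, -, -, h01⟩ := hadm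
  have hE0I : AEDisjoint volume E0 I := measure_mono_null (inter_subset_inter_right _ hIE1) h01
  have hdiff : AEDisjoint volume (E1 \ I) I := disjoint_sdiff_left.aedisjoint
  have hsplit : ∀ {A}, MeasurableSet A →
      nlArea1 s Ω A E1 = nlArea1 s Ω A (E1 \ I) + Ls1 s A I :=
    fun hA => by rw [← nlArea1_union_right hΩ hA hI hIΩ hdiff, sdiff_union_of_subset hIE1]
  have hnew : nlArea1 s Ω (E0 ∪ I) (E1 \ I) = nlArea1 s Ω E0 (E1 \ I) + Ls1 s I (E1 \ I) := by
    rw [nlArea1_comm, nlArea1_union_right hΩ (hE1.diff hI) hI hIΩ hE0I, nlArea1_comm,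
      Ls1_comm s (E1 \ I)]
  simp only [Fs1, hsplit hE0, hsplit hEm, hnew, nlArea1_union_right hΩ hEm hI hIΩ hE0I]
  set common := ENNReal.ofReal σm0 * nlArea1 s Ω Em E0 +
    ENNReal.ofReal σ01 * nlArea1 s Ω E0 (E1 \ I) + ENNReal.ofReal σm1 * nlArea1 s Ω Em (E1 \ I)
  calc _ = common +
        (ENNReal.ofReal σm0 * Ls1 s Em I + ENNReal.ofReal σ01 * Ls1 s I (E1 \ I) + g) := by ring
    _ ≤ common + (ENNReal.ofReal σ01 * Ls1 s E0 I + ENNReal.ofReal σm1 * Ls1 s Em I) := by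
        gcongr
    _ = _ := by ring

lemma sdiff_Ioo_ae_le_Iic_union_Ici {r ε : ℝ} {Em E1 : Set ℝ} (hEm : Ioo (-r) 0 ⊆ Em)
    (hEmE1 : volume (Em ∩ E1) = 0) :
    E1 \ Ioo 0 ε ≤ᵐ[volume] (Iic (-r) ∪ Ici ε : Set ℝ) := by
  refine ae_le_set.2 (measure_mono_null (fun x ⟨⟨hx1, hxI⟩, hx⟩ => ?_)
    (measure_union_null hEmE1 (measure_singleton (0 : ℝ))))
  simp only [mem_union, mem_Iic, mem_Ici, not_or, not_le] at hx
  rcases lt_trichotomy x 0 with hneg | rfl | hpos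
  exacts [Or.inl ⟨hEm ⟨hx.1, hneg⟩, hx1⟩, Or.inr rfl, absurd ⟨hpos, hx.2⟩ hxI]

lemma Ls1_strip_gain_le {s σm0 σ01 σm1 r ε : ℝ} {Em E0 E1 : Set ℝ} (hs : s ∈ Ioo 0 1)
    (hσm0 : 0 ≤ σm0) (hσ01 : 0 ≤ σ01) (hσ : σm0 + σ01 ≤ σm1) (hr : 0 < r)
    (hε : 0 < ε) (hεr : ε ≤ r) (hEm : Ioo (-r) 0 ⊆ Em) (hEmE1 : volume (Em ∩ E1) = 0)
    (hsmall : 8 * σ01 * (r ^ (-s) / s) * ε ≤ (σm1 - σm0 - σ01) / 2 * ε ^ (1 - s)) :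
    ENNReal.ofReal σm0 * Ls1 s Em (Ioo 0 ε) +
        ENNReal.ofReal σ01 * Ls1 s (Ioo 0 ε) (E1 \ Ioo 0 ε) +
        ENNReal.ofReal (1 / 4 * ((σm1 - σm0 - σ01) / 2) * ε ^ (1 - s)) ≤
      ENNReal.ofReal σ01 * Ls1 s E0 (Ioo 0 ε) + ENNReal.ofReal σm1 * Ls1 s Em (Ioo 0 ε) := by
  obtain ⟨hs0, hs1⟩ := hs
  set a := (σm1 - σm0 - σ01) / 2
  have ha : 0 ≤ a := div_nonneg (by linarith) zero_le_two
  set L := Ls1 s Em (Ioo 0 ε)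
  set T := ENNReal.ofReal (r ^ (-s) / s) * volume (Ioo 0 ε)
  have hcross : Ls1 s (Ioo 0 ε) (E1 \ Ioo 0 ε) ≤ 2 * T + L :=
    (Ls1_mono_right _ (sdiff_Ioo_ae_le_Iic_union_Ici hEm hEmE1)).trans <|
      (Ls1_Ioo_Iic_union_Ici_le hs0 hr).trans <|
      add_le_add le_rfl (Ls1_mono_left _ hEm.eventuallyLE)
  have hbox : ENNReal.ofReal (ε ^ (1 - s) / 4) ≤ L :=
    (ofReal_rpow_div_four_le_Ls1_Ioo ⟨by linarith, hs1.le⟩ hε).trans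
      (Ls1_mono_left _ ((Ioo_subset_Ioo_left (neg_le_neg hεr)).trans hEm).eventuallyLE)
  have hσm1 : ENNReal.ofReal σm1 =
      ENNReal.ofReal σm0 + ENNReal.ofReal σ01 + ENNReal.ofReal (2 * a) := by
    rw [← ENNReal.ofReal_add hσm0 hσ01, ← ENNReal.ofReal_add (by positivity) (by positivity)]
    congr 1; ring
  have hgain : ENNReal.ofReal σ01 * (2 * T) + ENNReal.ofReal (1 / 4 * a * ε ^ (1 - s)) ≤
      ENNReal.ofReal (2 * a) * ENNReal.ofReal (ε ^ (1 - s) / 4) := by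
    simp only [T]
    rw [Real.volume_Ioo, sub_zero, ← ENNReal.ofReal_mul (by positivity),
      ← ENNReal.ofReal_ofNat 2, ← ENNReal.ofReal_mul (by norm_num),
      ← ENNReal.ofReal_mul hσ01, ← ENNReal.ofReal_mul (by linarith),
      ← ENNReal.ofReal_add (by positivity) (by positivity)]
    exact ENNReal.ofReal_le_ofReal (by linarith)
  calc ENNReal.ofReal σm0 * L + ENNReal.ofReal σ01 * Ls1 s (Ioo 0 ε) (E1 \ Ioo 0 ε)
        + ENNReal.ofReal (1 / 4 * a * ε ^ (1 - s))
      ≤ ENNReal.ofReal σm0 * L + ENNReal.ofReal σ01 * (2 * T + L)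
        + ENNReal.ofReal (1 / 4 * a * ε ^ (1 - s)) := by gcongr
    _ = ENNReal.ofReal σm0 * L + ENNReal.ofReal σ01 * L
        + (ENNReal.ofReal σ01 * (2 * T) + ENNReal.ofReal (1 / 4 * a * ε ^ (1 - s))) := by ring
    _ ≤ ENNReal.ofReal σm0 * L + ENNReal.ofReal σ01 * L + ENNReal.ofReal (2 * a) * L := by
        grw [hgain, hbox]
    _ = ENNReal.ofReal σm1 * L := by rw [hσm1]; ring
    _ ≤ ENNReal.ofReal σ01 * Ls1 s E0 (Ioo 0 ε) + ENNReal.ofReal σm1 * L := le_add_self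

lemma eventually_mul_le_mul_rpow_one_sub {s a : ℝ} (hs : 0 < s) (ha : 0 < a) (K : ℝ) :
    ∀ᶠ ε in 𝓝[>] 0, K * ε ≤ a * ε ^ (1 - s) := by
  have hlim : Tendsto (fun ε : ℝ => K * ε ^ s) (𝓝 0) (𝓝 0) := by
    simpa [Real.zero_rpow hs.ne'] using
      ((Real.continuousAt_rpow_const 0 s (Or.inr hs.le)).tendsto).const_mul K
  filter_upwards [self_mem_nhdsWithin, nhdsWithin_le_nhds (hlim.eventually (gt_mem_nhds ha))]
    with ε (hε : 0 < ε) hKε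
  calc K * ε = K * ε ^ s * ε ^ (1 - s) := by
        rw [mul_assoc, ← Real.rpow_add hε, add_sub_cancel, Real.rpow_one]
    _ ≤ a * ε ^ (1 - s) := by gcongr

theorem reduce_energy_strip_1D_general
    (s : ℝ) (hs : s ∈ Set.Ioo (0 : ℝ) 1)
    (σm0 σ01 σm1 : ℝ) (hσm0 : 0 < σm0) (hσ01 : 0 < σ01)
    (hα0 : (σm0 + σ01 - σm1) / 2 < 0)
    (Ω : Set ℝ) (hΩo : IsOpen Ω)
    (h0Ω : (0 : ℝ) ∈ Ω)
    (r : ℝ) (hr : 0 < r)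
    (Em E0 E1 : Set ℝ) (hadm : Admissible1 Em E0 E1)
    (hE1 : Set.Ioo (0 : ℝ) r ⊆ E1) (hEm : Set.Ioo (-r) (0 : ℝ) ⊆ Em) :
    ∃ C₀ : ℝ, 0 < C₀ ∧ ∃ ε₀ : ℝ, 0 < ε₀ ∧ ∀ ε ∈ Set.Ioo (0 : ℝ) ε₀,
      Admissible1 Em (E0 ∪ Set.Ioo 0 ε) (E1 \ Set.Ioo 0 ε) ∧
      Fs1 s σm0 σ01 σm1 Ω Em (E0 ∪ Set.Ioo 0 ε) (E1 \ Set.Ioo 0 ε) +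
          ENNReal.ofReal (C₀ * |(σm0 + σ01 - σm1) / 2| * ε ^ (1 - s)) ≤
        Fs1 s σm0 σ01 σm1 Ω Em E0 E1 := by
  have habs : |(σm0 + σ01 - σm1) / 2| = (σm1 - σm0 - σ01) / 2 := by
    rw [abs_of_neg hα0]; ring
  obtain ⟨l, u, ⟨hl, hu⟩, hluΩ⟩ := mem_nhds_iff_exists_Ioo_subset.1 (hΩo.mem_nhds h0Ω)
  have hsmall : ∀ᶠ ε in 𝓝[>] 0, ε < min r u ∧
      8 * σ01 * (r ^ (-s) / s) * ε ≤ (σm1 - σm0 - σ01) / 2 * ε ^ (1 - s) :=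
    ((eventually_lt_nhds (lt_min hr hu)).filter_mono nhdsWithin_le_nhds).and
      (eventually_mul_le_mul_rpow_one_sub hs.1 (by linarith) _)
  obtain ⟨ε₀, hε₀, hε₀small⟩ := mem_nhdsGT_iff_exists_Ioo_subset.1 hsmall
  refine ⟨1 / 4, by norm_num, ε₀, hε₀, fun ε hε => ?_⟩
  obtain ⟨hεru, hεsmall⟩ := hε₀small hε
  have hIE1 : Ioo 0 ε ⊆ E1 := (Ioo_subset_Ioo_right (hεru.le.trans (min_le_left _ _))).trans hE1
  have hIΩ : Ioo 0 ε ⊆ Ω :=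
    (Ioo_subset_Ioo hl.le (hεru.le.trans (min_le_right _ _))).trans hluΩ
  refine ⟨hadm.union_diff measurableSet_Ioo hIE1, ?_⟩
  have hEmE1 : volume (Em ∩ E1) = 0 := hadm.2.2.2.2.2.1
  rw [habs]
  exact Fs1_union_diff_add_le hadm hΩo.measurableSet measurableSet_Ioo hIΩ hIE1 <|
    Ls1_strip_gain_le hs hσm0.le hσ01.le (by linarith) hr hε.1
      (hεru.le.trans (min_le_left _ _)) hEm hEmE1 hεsmall

/-- One-dimensional energy reduction: if `α₀ < 0`, `(0,r) ⊆ E₁` and `(-r,0) ⊆ E₋₁`, then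
covering `(0,ε)` with phase `0` reduces the energy by `C₀|α₀|ε^{1-s}`. -/
theorem reduce_energy_strip_1D
    (s : ℝ) (hs : s ∈ Set.Ioo (0 : ℝ) 1)
    (σm0 σ01 σm1 : ℝ) (hσm0 : 0 < σm0) (hσ01 : 0 < σ01) (hσm1 : 0 < σm1)
    (hα0 : (σm0 + σ01 - σm1) / 2 < 0)
    (Ω : Set ℝ) (hΩo : IsOpen Ω) (hΩconn : IsConnected Ω) (hΩb : Bornology.IsBounded Ω)
    (h0Ω : (0 : ℝ) ∈ Ω)
    (r : ℝ) (hr : 0 < r)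
    (Em E0 E1 : Set ℝ) (hadm : Admissible1 Em E0 E1)
    (hE1 : Set.Ioo (0 : ℝ) r ⊆ E1) (hEm : Set.Ioo (-r) (0 : ℝ) ⊆ Em) :
    ∃ C₀ : ℝ, 0 < C₀ ∧ ∃ ε₀ : ℝ, 0 < ε₀ ∧ ∀ ε ∈ Set.Ioo (0 : ℝ) ε₀,
      Admissible1 Em (E0 ∪ Set.Ioo 0 ε) (E1 \ Set.Ioo 0 ε) ∧
      Fs1 s σm0 σ01 σm1 Ω Em (E0 ∪ Set.Ioo 0 ε) (E1 \ Set.Ioo 0 ε) +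
          ENNReal.ofReal (C₀ * |(σm0 + σ01 - σm1) / 2| * ε ^ (1 - s)) ≤
        Fs1 s σm0 σ01 σm1 Ω Em E0 E1 :=
  reduce_energy_strip_1D_general s hs σm0 σ01 σm1 hσm0 hσ01 hα0 Ω hΩo h0Ω r hr Em E0 E1 hadm hE1 hEm
end
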